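/- arXiv:2012.12917 — 8 statements merged into one kernel-verified Lean document; each statement's English description precedes it below -/
import Mathlib

section
/- For every function F in the vector-valued RKHS G induced by K = k·Id_H there exists a unique Hilbert–Schmidt operator A on H such that F(x) = A φ(x) for all x ∈ E, and ‖A‖_{HS} = ‖F‖_G; conversely every Hilbert–Schmidt operator A on H gives rise to an element A φ(·) of G. -/
/-!
Since `⟪Kx x h, Kx x' h'⟫ = ⟪φ x, φ x'⟫ * ⟪h, h'⟫` and the `φ x` span a dense subspace,
`φ x ↦ Kx x` extends to a bounded bilinear map `S : H → H → G` with
`⟪S v h, S v' h'⟫ = ⟪v, v'⟫ * ⟪h, h'⟫`; this is `Θ` on elementary tensors, `S v h = Θ (h ⊗ v)`.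
For a Hilbert basis `b` the vectors `S (b i) (b j)` are orthonormal, and total because the
`Kx x h` are, so they form a Hilbert basis of `G`. The operator `A v := (S v)† F` has matrix
coefficients `⟪A (b i), b j⟫ = ⟪F, S (b i) (b j)⟫`, so Parseval in `G` and in `H` gives
`∑ ‖A (b i)‖² = ‖F‖²`. Conversely, the coefficients of a Hilbert–Schmidt `A` are square-summable
and are the coordinates of the required `F`. Uniqueness holds because the `φ x` are total.
-/

open scoped RealInnerProductSpace

section Extension

variable {E H H' G : Type*}
  [NormedAddCommGroup H] [InnerProductSpace ℝ H]
  [NormedAddCommGroup H'] [InnerProductSpace ℝ H']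
  [NormedAddCommGroup G] [InnerProductSpace ℝ G]
  {u : E → H} {T : E → H' →L[ℝ] G}

theorem inner_linearCombination_apply
    (hT : ∀ x x' h h', ⟪T x h, T x' h'⟫ = ⟪u x, u x'⟫ * ⟪h, h'⟫)
    (c c' : E →₀ ℝ) (h h' : H') :
    ⟪Finsupp.linearCombination ℝ T c h, Finsupp.linearCombination ℝ T c' h'⟫ =
      ⟪Finsupp.linearCombination ℝ u c, Finsupp.linearCombination ℝ u c'⟫ * ⟪h, h'⟫ := by
  simp only [Finsupp.linearCombination_apply, Finsupp.sum, sum_apply, smul_apply, sum_inner,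
    inner_sum, real_inner_smul_left, real_inner_smul_right, hT, Finset.sum_mul, mul_assoc]

theorem norm_linearCombination_apply
    (hT : ∀ x x' h h', ⟪T x h, T x' h'⟫ = ⟪u x, u x'⟫ * ⟪h, h'⟫) (c : E →₀ ℝ) (h : H') :
    ‖Finsupp.linearCombination ℝ T c h‖ = ‖Finsupp.linearCombination ℝ u c‖ * ‖h‖ := by
  rw [← sq_eq_sq₀ (norm_nonneg _) (by positivity), mul_pow, ← real_inner_self_eq_norm_sq,
    ← real_inner_self_eq_norm_sq, ← real_inner_self_eq_norm_sq, inner_linearCombination_apply hT]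

theorem exists_extension_of_inner_eq [CompleteSpace G]
    (hT : ∀ x x' h h', ⟪T x h, T x' h'⟫ = ⟪u x, u x'⟫ * ⟪h, h'⟫)
    (hu : Dense (Submodule.span ℝ (Set.range u) : Set H)) :
    ∃ S : H →L[ℝ] H' →L[ℝ] G, (∀ x, S (u x) = T x) ∧
      ∀ v v' h h', ⟪S v h, S v' h'⟫ = ⟪v, v'⟫ * ⟪h, h'⟫ := by
  have hdense : DenseRange (Finsupp.linearCombination ℝ u) := by
    rwa [DenseRange, ← LinearMap.coe_range, Finsupp.range_linearCombination]
  have hbound : ∀ c, ‖Finsupp.linearCombination ℝ T c‖ ≤ 1 * ‖Finsupp.linearCombination ℝ u c‖ :=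
    fun c => by
      rw [one_mul]
      exact ContinuousLinearMap.opNorm_le_bound _ (norm_nonneg _)
        fun h => (norm_linearCombination_apply hT c h).le
  set S := (Finsupp.linearCombination ℝ T).extendOfNorm (Finsupp.linearCombination ℝ u)
  have hS : ∀ c, S (Finsupp.linearCombination ℝ u c) = Finsupp.linearCombination ℝ T c :=
    LinearMap.extendOfNorm_eq hdense ⟨1, hbound⟩
  refine ⟨S, fun x => by simpa using hS (Finsupp.single x 1), fun v v' h h' => ?_⟩
  induction v, v' using hdense.induction_on₂ with
  | hp => exact isClosed_eq (by fun_prop) (by fun_prop)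
  | h c c' => rw [hS, hS, inner_linearCombination_apply hT]

end Extension

theorem HilbertBasis.hasSum_inner_sq {ι H : Type*} [NormedAddCommGroup H] [InnerProductSpace ℝ H]
    (b : HilbertBasis ι ℝ H) (x : H) : HasSum (fun i => ⟪b i, x⟫ ^ 2) (‖x‖ ^ 2) := by
  simpa only [sq, real_inner_comm x, real_inner_self_eq_norm_mul_norm] using
    b.hasSum_inner_mul_inner x x

theorem HilbertBasis.ext_of_inner {ι 𝕜 H : Type*} [RCLike 𝕜] [NormedAddCommGroup H]
    [InnerProductSpace 𝕜 H] (b : HilbertBasis ι 𝕜 H) {x y : H}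
    (h : ∀ i, inner 𝕜 (b i) x = inner 𝕜 (b i) y) : x = y :=
  b.repr.injective <| lp.ext <| funext fun i => by simp only [b.repr_apply_apply, h]

theorem HilbertBasis.continuousLinearMap_ext {ι 𝕜 H F : Type*} [RCLike 𝕜]
    [NormedAddCommGroup H] [InnerProductSpace 𝕜 H] [NormedAddCommGroup F] [NormedSpace 𝕜 F]
    (b : HilbertBasis ι 𝕜 H) {f g : H →L[𝕜] F} (h : ∀ i, f (b i) = g (b i)) : f = g :=
  ContinuousLinearMap.ext_on (Submodule.dense_iff_topologicalClosure_eq_top.2 b.dense_span)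
    (Set.forall_mem_range.2 h)

theorem HilbertBasis.ext₂ {ι ι' 𝕜 H H' F : Type*} [RCLike 𝕜] [NormedAddCommGroup H]
    [InnerProductSpace 𝕜 H] [NormedAddCommGroup H'] [InnerProductSpace 𝕜 H']
    [NormedAddCommGroup F] [NormedSpace 𝕜 F]
    (b : HilbertBasis ι 𝕜 H) (b' : HilbertBasis ι' 𝕜 H') {B₁ B₂ : H →L[𝕜] H' →L[𝕜] F}
    (h : ∀ i j, B₁ (b i) (b' j) = B₂ (b i) (b' j)) : B₁ = B₂ :=
  b.continuousLinearMap_ext fun i => b'.continuousLinearMap_ext (h i)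

section TensorIsometry

variable {H H' G ι ι' : Type*}
  [NormedAddCommGroup H] [InnerProductSpace ℝ H]
  [NormedAddCommGroup H'] [InnerProductSpace ℝ H']
  [NormedAddCommGroup G] [InnerProductSpace ℝ G]
  {S : H →L[ℝ] H' →L[ℝ] G} (b : HilbertBasis ι ℝ H) (b' : HilbertBasis ι' ℝ H')

theorem orthonormal_apply_hilbertBasis
    (hS : ∀ v v' h h', ⟪S v h, S v' h'⟫ = ⟪v, v'⟫ * ⟪h, h'⟫) :
    Orthonormal ℝ fun p : ι × ι' => S (b p.1) (b' p.2) := by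
  classical
  rw [orthonormal_iff_ite]
  rintro ⟨i, j⟩ ⟨k, l⟩
  simp only [hS, orthonormal_iff_ite.1 b.orthonormal, orthonormal_iff_ite.1 b'.orthonormal,
    Prod.mk.injEq, ite_zero_mul_ite_zero, mul_one]

theorem orthogonal_span_apply_hilbertBasis_eq_bot
    (hdense : Dense (Submodule.span ℝ (Set.range fun p : H × H' => S p.1 p.2) : Set G)) :
    (Submodule.span ℝ (Set.range fun p : ι × ι' => S (b p.1) (b' p.2)))ᗮ = ⊥ := by
  refine (Submodule.eq_bot_iff _).2 fun F hF => ?_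
  rw [Submodule.mem_orthogonal] at hF
  have hB : (ContinuousLinearMap.compL ℝ H' G ℝ (innerSL ℝ F)).comp S = 0 :=
    b.ext₂ b' fun i j => by
      simpa [real_inner_comm] using hF _ (Submodule.subset_span ⟨(i, j), rfl⟩)
  have hFS : ∀ v h, ⟪F, S v h⟫ = 0 := fun v h => by
    simpa using congrArg (fun B => B v h) hB
  refine hdense.eq_zero_of_inner_left ℝ fun g hg => ?_
  rw [← Submodule.mem_orthogonal_singleton_iff_inner_right]
  refine Submodule.span_le.2 ?_ hg
  rintro _ ⟨⟨v, h⟩, rfl⟩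
  exact Submodule.mem_orthogonal_singleton_iff_inner_right.2 (hFS v h)

noncomputable def tensorHilbertBasis [CompleteSpace G]
    (hS : ∀ v v' h h', ⟪S v h, S v' h'⟫ = ⟪v, v'⟫ * ⟪h, h'⟫)
    (hdense : Dense (Submodule.span ℝ (Set.range fun p : H × H' => S p.1 p.2) : Set G)) :
    HilbertBasis (ι × ι') ℝ G :=
  HilbertBasis.mkOfOrthogonalEqBot (orthonormal_apply_hilbertBasis b b' hS)
    (orthogonal_span_apply_hilbertBasis_eq_bot b b' hdense)

theorem coe_tensorHilbertBasis [CompleteSpace G]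
    (hS : ∀ v v' h h', ⟪S v h, S v' h'⟫ = ⟪v, v'⟫ * ⟪h, h'⟫)
    (hdense : Dense (Submodule.span ℝ (Set.range fun p : H × H' => S p.1 p.2) : Set G)) :
    ⇑(tensorHilbertBasis b b' hS hdense) = fun p => S (b p.1) (b' p.2) :=
  HilbertBasis.coe_mkOfOrthogonalEqBot _ _

end TensorIsometry

section OperatorOf

variable {H H' G ι ι' : Type*}
  [NormedAddCommGroup H] [InnerProductSpace ℝ H]
  [NormedAddCommGroup H'] [InnerProductSpace ℝ H'] [CompleteSpace H']
  [NormedAddCommGroup G] [InnerProductSpace ℝ G] [CompleteSpace G]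
  (S : H →L[ℝ] H' →L[ℝ] G)

noncomputable def operatorOf (F : G) : H →L[ℝ] H' :=
  LinearMap.mkContinuous
    { toFun := fun v => (S v).adjoint F
      map_add' := fun v w => by simp only [map_add, add_apply]
      map_smul' := fun c v => by simp only [map_smul, smul_apply, RingHom.id_apply] }
    (‖S‖ * ‖F‖) fun v =>
      calc ‖(S v).adjoint F‖ ≤ ‖(S v).adjoint‖ * ‖F‖ := (S v).adjoint.le_opNorm F
        _ = ‖S v‖ * ‖F‖ := by rw [LinearIsometryEquiv.norm_map]
        _ ≤ ‖S‖ * ‖v‖ * ‖F‖ := by gcongr; exact S.le_opNorm v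
        _ = ‖S‖ * ‖F‖ * ‖v‖ := by ring

theorem operatorOf_apply (F : G) (v : H) : operatorOf S F v = (S v).adjoint F := rfl

theorem inner_operatorOf_apply (F : G) (v : H) (h : H') :
    ⟪operatorOf S F v, h⟫ = ⟪F, S v h⟫ := by
  rw [operatorOf_apply, ContinuousLinearMap.adjoint_inner_left]

variable {S} (b : HilbertBasis ι ℝ H) (b' : HilbertBasis ι' ℝ H')
  (e : HilbertBasis (ι × ι') ℝ G)

theorem hasSum_norm_sq_operatorOf (he : ⇑e = fun p => S (b p.1) (b' p.2)) (F : G) :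
    HasSum (fun i => ‖operatorOf S F (b i)‖ ^ 2) (‖F‖ ^ 2) :=
  (e.hasSum_inner_sq F).prod_fiberwise fun i => by
    convert b'.hasSum_inner_sq (operatorOf S F (b i)) using 3 with j
    rw [he, real_inner_comm _ (b' j), inner_operatorOf_apply, real_inner_comm]

theorem exists_operatorOf_eq (he : ⇑e = fun p => S (b p.1) (b' p.2)) (A : H →L[ℝ] H')
    (hA : Summable fun i => ‖A (b i)‖ ^ 2) : ∃ F : G, operatorOf S F = A := by
  have hc : Memℓp (fun p : ι × ι' => ⟪b' p.2, A (b p.1)⟫) 2 := by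
    refine memℓp_gen ?_
    simp only [ENNReal.toReal_ofNat, Real.rpow_two, Real.norm_eq_abs, sq_abs]
    refine (summable_prod_of_nonneg fun p => sq_nonneg _).2
      ⟨fun i => (b'.hasSum_inner_sq (A (b i))).summable, ?_⟩
    simpa only [fun i => (b'.hasSum_inner_sq (A (b i))).tsum_eq] using hA
  refine ⟨e.repr.symm ⟨_, hc⟩, b.continuousLinearMap_ext fun i => b'.ext_of_inner fun j => ?_⟩
  rw [real_inner_comm, inner_operatorOf_apply, real_inner_comm,
    show S (b i) (b' j) = e (i, j) by rw [he], ← e.repr_apply_apply,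
    LinearIsometryEquiv.apply_symm_apply]

end OperatorOf

/-- Operator reproducing property: for every `F` in the vector-valued RKHS `G` induced
by `K = k·Id_H` there is a unique Hilbert–Schmidt operator `A` on `H` with
`F(x) = A φ(x)` for all `x` and `‖A‖_{HS} = ‖F‖_G`; conversely every Hilbert–Schmidt
operator `A` on `H` gives rise to an element `A φ(·)` of `G`.  Here `F(x)` is the
evaluation `K_x* F` and the Hilbert–Schmidt norm is computed in the orthonormal basis
`b` of `H`. -/
theorem operator_reproducing_property
    {E H G ι : Type*}
    [NormedAddCommGroup H] [InnerProductSpace ℝ H] [CompleteSpace H]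
    [NormedAddCommGroup G] [InnerProductSpace ℝ G] [CompleteSpace G]
    (φ : E → H)
    (hφdense : Dense (Submodule.span ℝ (Set.range φ) : Set H))
    (b : HilbertBasis ι ℝ H)
    (Kx : E → H →L[ℝ] G)
    (hK : ∀ (x x' : E) (h h' : H),
      ⟪Kx x h, Kx x' h'⟫ = ⟪φ x, φ x'⟫ * ⟪h, h'⟫)
    (hGdense : Dense (Submodule.span ℝ {g : G | ∃ x h, g = Kx x h} : Set G)) :
    (∀ F : G, ∃! A : H →L[ℝ] H,
      (∀ x : E, ContinuousLinearMap.adjoint (Kx x) F = A (φ x)) ∧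
      HasSum (fun i => ‖A (b i)‖ ^ 2) (‖F‖ ^ 2)) ∧
    (∀ A : H →L[ℝ] H, Summable (fun i => ‖A (b i)‖ ^ 2) →
      ∃ F : G, ∀ x : E, ContinuousLinearMap.adjoint (Kx x) F = A (φ x)) := by
  obtain ⟨S, hSφ, hS⟩ := exists_extension_of_inner_eq hK hφdense
  have hSdense : Dense (Submodule.span ℝ (Set.range fun p : H × H => S p.1 p.2) : Set G) :=
    hGdense.mono <| Submodule.span_mono <| by
      rintro _ ⟨x, h, rfl⟩
      exact ⟨(φ x, h), by simp only [hSφ]⟩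
  have he := coe_tensorHilbertBasis b b hS hSdense
  have hφ : ∀ F x, operatorOf S F (φ x) = (Kx x).adjoint F := by
    simp only [operatorOf_apply, hSφ, implies_true]
  refine ⟨fun F => ⟨operatorOf S F,
    ⟨fun x => (hφ F x).symm, hasSum_norm_sq_operatorOf b b _ he F⟩, fun A hA => ?_⟩,
    fun A hA => ?_⟩
  · exact ContinuousLinearMap.ext_on hφdense
      (Set.forall_mem_range.2 fun x => by rw [← hA.1 x, hφ])
  · obtain ⟨F, rfl⟩ := exists_operatorOf_eq b b _ he A hA
    exact ⟨F, fun x => (hφ F x).symm⟩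
end

section
/- (Surrogate risk bound) For every Hilbert–Schmidt operator A : H → H, ‖A − P‖²_{H → L²(μ)} ≤ E[‖F*(X) − A*φ(X)‖²_H], where F*(x) = E[φ(Y) | X = x] is the conditional mean embedding, and this bound is sharp. -/
/-!
With `g := A*φ - F*`, the identities `⟪A f, φ x⟫ = ⟪f, A*φ x⟫` and
`⟪f, ∫ φ ∂p x⟫ = ∫ ⟪f, φ⟫ ∂p x` show that
`(A - P) f` is the function `x ↦ ⟪f, g x⟫` in `L²(μ)`. Cauchy–Schwarz pointwise then gives
`‖(A - P) f‖² ≤ ‖f‖² E‖g(X)‖²`, where `E‖g(X)‖² < ∞` because `F*` is square integrable by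
Jensen's inequality for the kernel `p` and the marginal identity `μ.bind p = ν`. If `g = h` a.s.,
then `(A - P) f` is the constant `⟪f, h⟫`, so `‖A - P‖ = ‖h‖` and both sides equal `‖h‖²`.
-/

open MeasureTheory ProbabilityTheory
open scoped RealInnerProductSpace ENNReal NNReal

theorem MeasureTheory.MemLp.integral_kernel {α β F : Type*} [MeasurableSpace α]
    [MeasurableSpace β] [NormedAddCommGroup F] [NormedSpace ℝ F] {μ : Measure α}
    {p : Kernel α β} [IsMarkovKernel p] {φ : β → F} {q : ℝ≥0} (hq : 1 ≤ q)
    (hφ : StronglyMeasurable φ)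
    (hφq : MemLp φ q (μ.bind (fun x => p x))) :
    MemLp (fun x => ∫ y, φ y ∂p x) q μ := by
  have hq0 : q ≠ 0 := (zero_lt_one.trans_le hq).ne'
  refine ⟨(StronglyMeasurable.integral_kernel_prod_right (f := fun _ y => φ y)
    (hφ.comp_measurable measurable_snd)).aestronglyMeasurable, ?_⟩
  rw [eLpNorm_lt_top_iff_lintegral_rpow_enorm_lt_top (by exact_mod_cast hq0) ENNReal.coe_ne_top]
  have jensen : ∀ x, ‖∫ y, φ y ∂p x‖ₑ ^ (q : ℝ) ≤ ∫⁻ y, ‖φ y‖ₑ ^ (q : ℝ) ∂p x := fun x =>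
    calc ‖∫ y, φ y ∂p x‖ₑ ^ (q : ℝ) ≤ eLpNorm φ 1 (p x) ^ (q : ℝ) := by
          rw [eLpNorm_one_eq_lintegral_enorm]
          gcongr
          exact enorm_integral_le_lintegral_enorm _
      _ ≤ eLpNorm φ q (p x) ^ (q : ℝ) := by
          gcongr
          exact eLpNorm_le_eLpNorm_of_exponent_le (by exact_mod_cast hq) hφ.aestronglyMeasurable
      _ = ∫⁻ y, ‖φ y‖ₑ ^ (q : ℝ) ∂p x := eLpNorm_nnreal_pow_eq_lintegral hq0
  calc ∫⁻ x, ‖∫ y, φ y ∂p x‖ₑ ^ (q : ℝ) ∂μ ≤ ∫⁻ x, ∫⁻ y, ‖φ y‖ₑ ^ (q : ℝ) ∂p x ∂μ :=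
        lintegral_mono jensen
    _ = ∫⁻ y, ‖φ y‖ₑ ^ (q : ℝ) ∂(μ.bind (fun x => p x)) :=
        (Measure.lintegral_bind p.measurable.aemeasurable
          (hφ.enorm.pow_const _).aemeasurable).symm
    _ < ∞ := by
        rw [← eLpNorm_nnreal_pow_eq_lintegral hq0]
        exact ENNReal.rpow_lt_top_of_nonneg (by positivity) hφq.eLpNorm_lt_top.ne

theorem MeasureTheory.L2.norm_sq_eq_integral_sq {E : Type*} [MeasurableSpace E]
    {μ : Measure E} {u : Lp ℝ 2 μ} {v : E → ℝ} (huv : u =ᵐ[μ] v) :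
    ‖u‖ ^ 2 = ∫ x, v x ^ 2 ∂μ := by
  rw [← real_inner_self_eq_norm_sq, L2.inner_def]
  refine integral_congr_ae ?_
  filter_upwards [huv] with x hx
  simp [hx, sq]

namespace ContinuousLinearMap

variable {𝕜 X Y Z : Type*} [NontriviallyNormedField 𝕜] [SeminormedAddCommGroup X]
  [NormedSpace 𝕜 X] [SeminormedAddCommGroup Y] [NormedSpace 𝕜 Y] [SeminormedAddCommGroup Z]
  [NormedSpace 𝕜 Z]

theorem opNorm_sq_le_of_forall_norm_apply_sq_le {T : X →L[𝕜] Y} {C : ℝ} (hC : 0 ≤ C)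
    (hT : ∀ f, ‖T f‖ ^ 2 ≤ C * ‖f‖ ^ 2) : ‖T‖ ^ 2 ≤ C := by
  refine (Real.le_sqrt (norm_nonneg _) hC).1 (T.opNorm_le_bound (Real.sqrt_nonneg _) fun f => ?_)
  rw [← Real.sqrt_sq (norm_nonneg f), ← Real.sqrt_mul hC]
  exact (Real.le_sqrt (norm_nonneg _) (by positivity)).2 (hT f)

theorem opNorm_eq_of_forall_norm_apply_eq {S : X →L[𝕜] Y} {T : X →L[𝕜] Z} (h : ∀ f, ‖S f‖ = ‖T f‖) :
    ‖S‖ = ‖T‖ :=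
  le_antisymm (S.opNorm_le_bound (norm_nonneg _) fun f => (h f).trans_le (T.le_opNorm f))
    (T.opNorm_le_bound (norm_nonneg _) fun f => (h f).symm.trans_le (S.le_opNorm f))

end ContinuousLinearMap

section InnerProductOperator

variable {E H : Type*} [MeasurableSpace E] [NormedAddCommGroup H] [InnerProductSpace ℝ H]
  {μ : Measure E} {Q : H →L[ℝ] Lp ℝ 2 μ}

theorem opNorm_sq_le_integral_norm_sq_of_ae_eq_inner {g : E → H} (hg : MemLp g 2 μ)
    (hQ : ∀ f, Q f =ᵐ[μ] fun x => ⟪f, g x⟫) : ‖Q‖ ^ 2 ≤ ∫ x, ‖g x‖ ^ 2 ∂μ := by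
  have hg2 : Integrable (fun x => ‖g x‖ ^ 2) μ := hg.norm.integrable_sq
  refine Q.opNorm_sq_le_of_forall_norm_apply_sq_le (integral_nonneg fun _ => sq_nonneg _)
    fun f => ?_
  have cauchy_schwarz : ∀ x, ⟪f, g x⟫ ^ 2 ≤ ‖f‖ ^ 2 * ‖g x‖ ^ 2 := fun x => by
    simpa only [sq, real_inner_self_eq_norm_sq] using real_inner_mul_inner_self_le f (g x)
  calc ‖Q f‖ ^ 2 = ∫ x, ⟪f, g x⟫ ^ 2 ∂μ := L2.norm_sq_eq_integral_sq (hQ f)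
    _ ≤ ∫ x, ‖f‖ ^ 2 * ‖g x‖ ^ 2 ∂μ :=
        integral_mono_of_nonneg (ae_of_all _ fun _ => sq_nonneg _) (hg2.const_mul _)
          (ae_of_all _ cauchy_schwarz)
    _ = (∫ x, ‖g x‖ ^ 2 ∂μ) * ‖f‖ ^ 2 := by rw [integral_const_mul, mul_comm]

theorem opNorm_eq_norm_of_ae_eq_inner_const [IsProbabilityMeasure μ] {h : H}
    (hQ : ∀ f, Q f =ᵐ[μ] fun _ => ⟪f, h⟫) : ‖Q‖ = ‖h‖ := by
  refine .trans (ContinuousLinearMap.opNorm_eq_of_forall_norm_apply_eq (T := innerSL ℝ h)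
    fun f => ?_) (innerSL_apply_norm ℝ h)
  have hsq : ‖Q f‖ ^ 2 = ⟪f, h⟫ ^ 2 := by
    rw [L2.norm_sq_eq_integral_sq (hQ f), integral_const, probReal_univ, one_smul]
  rw [innerSL_apply_apply, real_inner_comm, Real.norm_eq_abs,
    ← sq_eq_sq₀ (norm_nonneg _) (abs_nonneg _), sq_abs, hsq]

end InnerProductOperator

/-- `Q` is the operator `A − P : H → L²(μ)`, and `p x` the law of `Y` given `X = x`. -/
theorem surrogate_risk_bound_general
    {E H : Type*} [MeasurableSpace E]
    [NormedAddCommGroup H] [InnerProductSpace ℝ H] [CompleteSpace H]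
    (μ ν : Measure E) [IsProbabilityMeasure μ]
    (p : Kernel E E) [IsMarkovKernel p]
    (hmarg : μ.bind (fun x => p x) = ν)
    (φ : E → H) (hφmeas : StronglyMeasurable φ)
    (hφμ : MemLp φ 2 μ) (hφν : MemLp φ 2 ν)
    (hφint : ∀ x, Integrable φ (p x))
    (A : H →L[ℝ] H)
    (Q : H →L[ℝ] Lp ℝ 2 μ)
    (hQ : ∀ f : H, (Q f : E → ℝ) =ᵐ[μ]
      fun x => ⟪A f, φ x⟫ - ∫ y, ⟪f, φ y⟫ ∂(p x)) :
    ‖Q‖ ^ 2 ≤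
      ∫ x, ‖(∫ y, φ y ∂(p x)) - ContinuousLinearMap.adjoint A (φ x)‖ ^ 2 ∂μ ∧
    (∀ h : H,
      (∀ᵐ x ∂μ, ContinuousLinearMap.adjoint A (φ x) - (∫ y, φ y ∂(p x)) = h) →
      ‖Q‖ ^ 2 =
        ∫ x, ‖(∫ y, φ y ∂(p x)) - ContinuousLinearMap.adjoint A (φ x)‖ ^ 2 ∂μ) := by
  set g : E → H := fun x => ContinuousLinearMap.adjoint A (φ x) - ∫ y, φ y ∂p x
  have hQg : ∀ f, Q f =ᵐ[μ] fun x => ⟪f, g x⟫ := fun f => (hQ f).mono fun x hx => by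
    simp only [hx, g, inner_sub_right, ContinuousLinearMap.adjoint_inner_right,
      integral_inner (hφint x)]
  have hF : MemLp (fun x => ∫ y, φ y ∂p x) 2 μ := by
    subst hmarg
    exact hφν.integral_kernel (q := 2) one_le_two hφmeas
  have hg : MemLp g 2 μ := ((ContinuousLinearMap.adjoint A).comp_memLp' hφμ).sub hF
  have hrisk : ∫ x, ‖(∫ y, φ y ∂p x) - ContinuousLinearMap.adjoint A (φ x)‖ ^ 2 ∂μ
      = ∫ x, ‖g x‖ ^ 2 ∂μ := by
    simp_rw [g, norm_sub_rev]
  refine ⟨hrisk ▸ opNorm_sq_le_integral_norm_sq_of_ae_eq_inner hg hQg, fun h hgh => ?_⟩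
  have hQh : ∀ f, Q f =ᵐ[μ] fun _ => ⟪f, h⟫ := fun f =>
    (hQg f).trans (hgh.mono fun x hx => by simp only [g, hx])
  have hg_const : ∫ x, ‖g x‖ ^ 2 ∂μ = ∫ _, ‖h‖ ^ 2 ∂μ :=
    integral_congr_ae (hgh.mono fun x hx => by simp only [g, hx])
  rw [hrisk, opNorm_eq_norm_of_ae_eq_inner_const hQh, hg_const, integral_const, probReal_univ,
    one_smul]

/-- Surrogate risk bound: for every Hilbert–Schmidt operator `A : H → H`,
`‖A − P‖²_{H → L²(μ)} ≤ E[‖F*(X) − A*φ(X)‖²_H]`, where `F*(x) = E[φ(Y) | X = x]`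
is the conditional mean embedding, and the bound is sharp (equality holds whenever
`A*φ(X) − F*(X)` is `μ`-a.s. equal to a constant element of `H`).  The operator
`A − P : H → L²(μ)` is encoded by `Q`. -/
theorem surrogate_risk_bound
    {E H ι : Type*} [MeasurableSpace E]
    [NormedAddCommGroup H] [InnerProductSpace ℝ H] [CompleteSpace H]
    (μ ν : Measure E) [IsProbabilityMeasure μ] [IsProbabilityMeasure ν]
    (p : Kernel E E) [IsMarkovKernel p]
    (hmarg : μ.bind (fun x => p x) = ν)
    (φ : E → H) (hφmeas : StronglyMeasurable φ)
    (hφμ : MemLp φ 2 μ) (hφν : MemLp φ 2 ν)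
    (hφint : ∀ x, Integrable φ (p x))
    (b : HilbertBasis ι ℝ H)
    (A : H →L[ℝ] H) (hA : Summable fun i => ‖A (b i)‖ ^ 2)
    (Q : H →L[ℝ] Lp ℝ 2 μ)
    (hQ : ∀ f : H, (Q f : E → ℝ) =ᵐ[μ]
      fun x => ⟪A f, φ x⟫ - ∫ y, ⟪f, φ y⟫ ∂(p x)) :
    ‖Q‖ ^ 2 ≤
      ∫ x, ‖(∫ y, φ y ∂(p x)) - ContinuousLinearMap.adjoint A (φ x)‖ ^ 2 ∂μ ∧
    (∀ h : H,
      (∀ᵐ x ∂μ, ContinuousLinearMap.adjoint A (φ x) - (∫ y, φ y ∂(p x)) = h) →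
      ‖Q‖ ^ 2 =
        ∫ x, ‖(∫ y, φ y ∂(p x)) - ContinuousLinearMap.adjoint A (φ x)‖ ^ 2 ∂μ) :=
  surrogate_risk_bound_general μ ν p hmarg φ hφmeas hφμ hφν hφint A Q hQ
end

section
/- If the kernel k is characteristic, then ‖P − P'‖_{H→L²(μ)} = 0 if and only if p(x, ·) = p'(x, ·) for μ-almost every x ∈ E. -/
open MeasureTheory ProbabilityTheory
open scoped RealInnerProductSpace InnerProductSpace

/-!
Write `m x = ∫ φ ∂p(x)` and `m' x = ∫ φ ∂p'(x)` for the kernel mean embeddings. Exchanging inner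
product and integral, `Q f` is the function `x ↦ ⟪f, m x - m' x⟫`, so `Q = 0` says that every
coordinate of `m - m'` vanishes `μ`-a.e. Since `m - m'` takes values in the closed span of the range
of `φ`, which is separable, countably many coordinates suffice and `m = m'` `μ`-a.e. Finally
`m x = m' x ↔ p x = p' x` because the kernel is characteristic.
-/

section

variable {α E : Type*} [MeasurableSpace α] {μ : Measure α}

theorem ae_eq_zero_iff_forall_inner_of_isSeparable {𝕜 : Type*} [RCLike 𝕜] [NormedAddCommGroup E]
    [InnerProductSpace 𝕜 E] [CompleteSpace E] {t : Set E} (ht : TopologicalSpace.IsSeparable t)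
    {f : α → E} (hft : ∀ᵐ x ∂μ, f x ∈ t) :
    f =ᵐ[μ] 0 ↔ ∀ c : E, (fun x => ⟪c, f x⟫_𝕜) =ᵐ[μ] 0 := by
  refine ⟨fun hf c => hf.mono fun x hx => by simp [hx], fun hf => ?_⟩
  refine ae_eq_zero_of_forall_dual_of_isSeparable 𝕜 ht (fun c => ?_) hft
  filter_upwards [hf ((InnerProductSpace.toDual 𝕜 E).symm c)] with x hx
  simpa [InnerProductSpace.toDual_symm_apply] using hx

theorem integral_mem_topologicalClosure_span_range [NormedAddCommGroup E] [NormedSpace ℝ E]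
    [CompleteSpace E] [IsProbabilityMeasure μ] {φ : α → E} (hφ : Integrable φ μ) :
    ∫ y, φ y ∂μ ∈ (Submodule.span ℝ (Set.range φ)).topologicalClosure :=
  (Submodule.convex _).integral_mem (Submodule.isClosed_topologicalClosure _)
    (.of_forall fun y => Submodule.le_topologicalClosure _ (Submodule.subset_span ⟨y, rfl⟩)) hφ

theorem ContinuousLinearMap.norm_eq_zero_iff_forall_coeFn_ae_eq_zero {F : Type*}
    [NormedAddCommGroup F] [NormedSpace ℝ F] {p : ENNReal} [Fact (1 ≤ p)]
    (Q : F →L[ℝ] Lp ℝ p μ) : ‖Q‖ = 0 ↔ ∀ f, (Q f : α → ℝ) =ᵐ[μ] 0 := by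
  simp only [norm_eq_zero, ContinuousLinearMap.ext_iff, zero_apply,
    Lp.eq_zero_iff_ae_eq_zero]

end

theorem characteristic_kernel_ae_equality_general
    {E H : Type*} [MeasurableSpace E]
    [NormedAddCommGroup H] [InnerProductSpace ℝ H] [CompleteSpace H]
    (μ : Measure E)
    (p p' : Kernel E E) [IsMarkovKernel p] [IsMarkovKernel p']
    (φ : E → H) (hφmeas : StronglyMeasurable φ)
    (hint : ∀ x, Integrable φ (p x)) (hint' : ∀ x, Integrable φ (p' x))
    (hchar : ∀ π π' : Measure E, IsProbabilityMeasure π → IsProbabilityMeasure π' →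
      (∫ y, φ y ∂π) = (∫ y, φ y ∂π') → π = π')
    (Q : H →L[ℝ] Lp ℝ 2 μ)
    (hQ : ∀ f : H, (Q f : E → ℝ) =ᵐ[μ]
      fun x => (∫ y, ⟪f, φ y⟫ ∂(p x)) - ∫ y, ⟪f, φ y⟫ ∂(p' x)) :
    ‖Q‖ = 0 ↔ ∀ᵐ x ∂μ, p x = p' x := by
  set m : E → H := fun x => ∫ y, φ y ∂(p x)
  set m' : E → H := fun x => ∫ y, φ y ∂(p' x)
  set K := (Submodule.span ℝ (Set.range φ)).topologicalClosure
  have hK : TopologicalSpace.IsSeparable (K : Set H) := by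
    rw [Submodule.topologicalClosure_coe]
    exact hφmeas.isSeparable_range.span.closure
  have hmK : ∀ x, m x - m' x ∈ K := fun x =>
    K.sub_mem (integral_mem_topologicalClosure_span_range (hint x))
      (integral_mem_topologicalClosure_span_range (hint' x))
  have hQ' : ∀ f, (Q f : E → ℝ) =ᵐ[μ] fun x => ⟪f, m x - m' x⟫ := fun f =>
    (hQ f).trans (.of_forall fun x => by
      simp only [m, m', inner_sub_right, integral_inner (hint x), integral_inner (hint' x)])
  calc ‖Q‖ = 0 ↔ ∀ f : H, (fun x => ⟪f, m x - m' x⟫) =ᵐ[μ] 0 := by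
        rw [Q.norm_eq_zero_iff_forall_coeFn_ae_eq_zero]
        exact forall_congr' fun f => ⟨(hQ' f).symm.trans, (hQ' f).trans⟩
    _ ↔ (fun x => m x - m' x) =ᵐ[μ] 0 :=
        (ae_eq_zero_iff_forall_inner_of_isSeparable (𝕜 := ℝ) hK (.of_forall hmK)).symm
    _ ↔ ∀ᵐ x ∂μ, p x = p' x := Filter.eventually_congr (.of_forall fun x =>
        sub_eq_zero.trans ⟨hchar _ _ inferInstance inferInstance, fun h => by simp only [m, m', h]⟩)

/-- If the kernel (with feature map `φ`) is characteristic, then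
`‖P − P'‖_{H→L²(μ)} = 0` if and only if `p(x,·) = p'(x,·)` for `μ`-almost every `x`.
The difference operator `P − P' : H → L²(μ)` is encoded as `Q`. -/
theorem characteristic_kernel_ae_equality
    {E H : Type*} [MeasurableSpace E]
    [NormedAddCommGroup H] [InnerProductSpace ℝ H] [CompleteSpace H]
    (μ : Measure E) [IsProbabilityMeasure μ]
    (p p' : Kernel E E) [IsMarkovKernel p] [IsMarkovKernel p']
    (φ : E → H) (hφmeas : StronglyMeasurable φ)
    (hφμ : MemLp φ 2 μ)
    (hint : ∀ x, Integrable φ (p x)) (hint' : ∀ x, Integrable φ (p' x))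
    (hchar : ∀ π π' : Measure E, IsProbabilityMeasure π → IsProbabilityMeasure π' →
      (∫ y, φ y ∂π) = (∫ y, φ y ∂π') → π = π')
    (Q : H →L[ℝ] Lp ℝ 2 μ)
    (hQ : ∀ f : H, (Q f : E → ℝ) =ᵐ[μ]
      fun x => (∫ y, ⟪f, φ y⟫ ∂(p x)) - ∫ y, ⟪f, φ y⟫ ∂(p' x)) :
    ‖Q‖ = 0 ↔ ∀ᵐ x ∂μ, p x = p' x :=
  characteristic_kernel_ae_equality_general μ p p' φ hφmeas hint hint' hchar Q hQ
end

section
/- Let X, X', Y, Y' be E-valued random variables with X ∼ μ and X' ∼ μ, and let P, P' : H → L²(μ) be the bounded conditional expectation operators Pf = E[f(Y)|X = ·] and P'f = E[f(Y')|X' = ·]. If the kernel k is characteristic, then ‖P − P'‖_{H→L²(μ)} = 0 if and only if the joint laws satisfy L(X,Y) = L(X',Y'). -/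
/-!
Equal joint laws need not force `p =ᵐ[μ] p'` here (the σ-algebra on `E` is not assumed countably
generated), but they do determine conditional means: writing a real function as the difference of
its positive and negative parts, the lintegral of each part against `p x` is fixed `μ`-a.e. by its
set integrals against `μ`, which are integrals against `μ ⊗ₘ p`. Conversely, if `Q = 0` then for
`μ`-a.e. `x` the mean embeddings of `p x` and `p' x` have the same inner product with every vector
of a countable set whose closure contains the range of `φ`; their difference is then orthogonal to
both embeddings, hence zero, and characteristicness gives `p x = p' x`.
-/

open MeasureTheory ProbabilityTheory Filter
open scoped RealInnerProductSpace ENNReal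

def IsCharacteristic {E H : Type*} [MeasurableSpace E] [NormedAddCommGroup H]
    [NormedSpace ℝ H] (φ : E → H) : Prop :=
  ∀ π π' : Measure E, IsProbabilityMeasure π → IsProbabilityMeasure π' →
    (∫ y, φ y ∂π) = (∫ y, φ y ∂π') → π = π'

lemma integral_eq_of_integral_inner_eq {E H : Type*} [MeasurableSpace E]
    [NormedAddCommGroup H] [InnerProductSpace ℝ H] [CompleteSpace H]
    {π π' : Measure E} {φ : E → H} {c : Set H} (hc : Set.range φ ⊆ closure c)
    (hπ : Integrable φ π) (hπ' : Integrable φ π')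
    (h : ∀ f ∈ c, ∫ y, ⟪f, φ y⟫ ∂π = ∫ y, ⟪f, φ y⟫ ∂π') :
    ∫ y, φ y ∂π = ∫ y, φ y ∂π' := by
  set d := ∫ y, φ y ∂π - ∫ y, φ y ∂π'
  have horth_c : Set.EqOn (fun f ↦ ⟪f, d⟫) 0 c := fun f hf ↦ by
    simp only [d, inner_sub_right, ← integral_inner hπ, ← integral_inner hπ', h f hf, sub_self,
      Pi.zero_apply]
  have horth_range : ∀ y, ⟪d, φ y⟫ = 0 := fun y ↦ by
    rw [real_inner_comm]
    exact horth_c.closure (by fun_prop) continuous_const (hc (Set.mem_range_self y))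
  have hdd : ⟪d, d⟫ = 0 := by
    simp only [d, inner_sub_right, ← integral_inner hπ, ← integral_inner hπ', horth_range,
      integral_zero, sub_self]
  exact sub_eq_zero.mp (inner_self_eq_zero.mp hdd)

lemma ContinuousLinearMap.norm_eq_zero_iff_of_coeFn_ae_eq_sub
    {α F : Type*} {mα : MeasurableSpace α} {μ : Measure α} {p : ℝ≥0∞} [Fact (1 ≤ p)]
    [NormedAddCommGroup F] [NormedSpace ℝ F] {Q : F →L[ℝ] Lp ℝ p μ} {g g' : F → α → ℝ}
    (hQ : ∀ f, (Q f : α → ℝ) =ᵐ[μ] fun x ↦ g f x - g' f x) :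
    ‖Q‖ = 0 ↔ ∀ f, g f =ᵐ[μ] g' f := by
  rw [norm_eq_zero, ContinuousLinearMap.ext_iff]
  refine forall_congr' fun f ↦ ?_
  rw [zero_apply, Lp.ext_iff, (hQ f).congr_left,
    (Lp.coeFn_zero ℝ p μ).congr_right, eventuallyEq_iff_sub (f := g f)]
  rfl

namespace ProbabilityTheory.Kernel

variable {α β : Type*} {mα : MeasurableSpace α} {mβ : MeasurableSpace β}
  {μ : Measure α} {κ η : Kernel α β}

lemma lintegral_ae_eq_of_compProd_eq [SigmaFinite μ] [IsSFiniteKernel κ] [IsSFiniteKernel η]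
    (h : μ ⊗ₘ κ = μ ⊗ₘ η) {g : β → ℝ≥0∞} (hg : Measurable g) :
    (fun a ↦ ∫⁻ b, g b ∂κ a) =ᵐ[μ] fun a ↦ ∫⁻ b, g b ∂η a := by
  refine ae_eq_of_forall_setLIntegral_eq_of_sigmaFinite hg.lintegral_kernel hg.lintegral_kernel
    fun s hs _ ↦ ?_
  have hsetLIntegral (ν : Kernel α β) [IsSFiniteKernel ν] :
      ∫⁻ a in s, ∫⁻ b, g b ∂ν a ∂μ = ∫⁻ z in s ×ˢ Set.univ, g z.2 ∂(μ ⊗ₘ ν) := by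
    rw [Measure.setLIntegral_compProd (f := fun z ↦ g z.2) (hg.comp measurable_snd) hs
      MeasurableSet.univ]
    simp only [Measure.restrict_univ]
  rw [hsetLIntegral κ, hsetLIntegral η, h]

lemma integral_ae_eq_of_compProd_eq [SigmaFinite μ] [IsSFiniteKernel κ] [IsSFiniteKernel η]
    (h : μ ⊗ₘ κ = μ ⊗ₘ η) {g : β → ℝ} (hg : Measurable g)
    (hκ : ∀ᵐ a ∂μ, Integrable g (κ a)) (hη : ∀ᵐ a ∂μ, Integrable g (η a)) :
    (fun a ↦ ∫ b, g b ∂κ a) =ᵐ[μ] fun a ↦ ∫ b, g b ∂η a := by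
  filter_upwards [lintegral_ae_eq_of_compProd_eq h hg.ennreal_ofReal,
    lintegral_ae_eq_of_compProd_eq h (g := fun b ↦ .ofReal (-g b)) hg.neg.ennreal_ofReal, hκ, hη]
    with a hpos hneg hκa hηa
  rw [integral_eq_lintegral_pos_part_sub_lintegral_neg_part hκa,
    integral_eq_lintegral_pos_part_sub_lintegral_neg_part hηa, hpos, hneg]

variable {H : Type*} [NormedAddCommGroup H] [InnerProductSpace ℝ H] [CompleteSpace H]

lemma ae_eq_of_integral_inner_ae_eq [IsMarkovKernel κ] [IsMarkovKernel η] {φ : β → H}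
    (hφ : IsCharacteristic φ) (hφ_sep : TopologicalSpace.IsSeparable (Set.range φ))
    (hκ : ∀ᵐ a ∂μ, Integrable φ (κ a)) (hη : ∀ᵐ a ∂μ, Integrable φ (η a))
    (h : ∀ f : H, (fun a ↦ ∫ y, ⟪f, φ y⟫ ∂κ a) =ᵐ[μ] fun a ↦ ∫ y, ⟪f, φ y⟫ ∂η a) :
    κ =ᵐ[μ] η := by
  obtain ⟨c, hc, hφc⟩ := hφ_sep
  filter_upwards [(ae_ball_iff hc).2 fun f _ ↦ h f, hκ, hη] with a ha hκa hηa
  exact hφ _ _ inferInstance inferInstance (integral_eq_of_integral_inner_eq hφc hκa hηa ha)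

lemma compProd_eq_iff_integral_inner_ae_eq [SigmaFinite μ] [IsMarkovKernel κ]
    [IsMarkovKernel η] {φ : β → H} (hφ : IsCharacteristic φ) (hφm : StronglyMeasurable φ)
    (hκ : ∀ᵐ a ∂μ, Integrable φ (κ a)) (hη : ∀ᵐ a ∂μ, Integrable φ (η a)) :
    μ ⊗ₘ κ = μ ⊗ₘ η ↔
      ∀ f : H, (fun a ↦ ∫ y, ⟪f, φ y⟫ ∂κ a) =ᵐ[μ] fun a ↦ ∫ y, ⟪f, φ y⟫ ∂η a := by
  refine ⟨fun h f ↦ ?_, fun h ↦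
    Measure.compProd_congr (ae_eq_of_integral_inner_ae_eq hφ hφm.isSeparable_range hκ hη h)⟩
  have hinner_meas : Measurable fun y ↦ ⟪f, φ y⟫ :=
    (stronglyMeasurable_const.inner hφm).measurable
  exact integral_ae_eq_of_compProd_eq h hinner_meas
    (hκ.mono fun a ha ↦ ha.const_inner f) (hη.mono fun a ha ↦ ha.const_inner f)

end ProbabilityTheory.Kernel

theorem characteristic_kernel_joint_law_general
    {E H : Type*} [MeasurableSpace E]
    [NormedAddCommGroup H] [InnerProductSpace ℝ H] [CompleteSpace H]
    (μ : Measure E) [IsProbabilityMeasure μ]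
    (p p' : Kernel E E) [IsMarkovKernel p] [IsMarkovKernel p']
    (φ : E → H) (hφmeas : StronglyMeasurable φ)
    (hint : ∀ x, Integrable φ (p x)) (hint' : ∀ x, Integrable φ (p' x))
    (hchar : ∀ π π' : Measure E, IsProbabilityMeasure π → IsProbabilityMeasure π' →
      (∫ y, φ y ∂π) = (∫ y, φ y ∂π') → π = π')
    (Q : H →L[ℝ] Lp ℝ 2 μ)
    (hQ : ∀ f : H, (Q f : E → ℝ) =ᵐ[μ]
      fun x => (∫ y, ⟪f, φ y⟫ ∂(p x)) - ∫ y, ⟪f, φ y⟫ ∂(p' x)) :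
    ‖Q‖ = 0 ↔ μ.compProd p = μ.compProd p' := by
  rw [ContinuousLinearMap.norm_eq_zero_iff_of_coeFn_ae_eq_sub hQ,
    Kernel.compProd_eq_iff_integral_inner_ae_eq hchar hφmeas (ae_of_all _ hint)
      (ae_of_all _ hint')]

/-- Let `X, X', Y, Y'` be `E`-valued random variables with `X ∼ μ`, `X' ∼ μ`, and let
`P, P' : H → L²(μ)` be the conditional expectation operators `Pf = E[f(Y)|X = ·]`,
`P'f = E[f(Y')|X' = ·]` given by the Markov kernels `p, p'` (difference encoded as `Q`).
If the kernel is characteristic, then `‖P − P'‖_{H→L²(μ)} = 0` iff the joint laws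
agree: `L(X,Y) = μ ⊗ₘ p = μ ⊗ₘ p' = L(X',Y')`. -/
theorem characteristic_kernel_joint_law
    {E H : Type*} [MeasurableSpace E]
    [NormedAddCommGroup H] [InnerProductSpace ℝ H] [CompleteSpace H]
    (μ : Measure E) [IsProbabilityMeasure μ]
    (p p' : Kernel E E) [IsMarkovKernel p] [IsMarkovKernel p']
    (φ : E → H) (hφmeas : StronglyMeasurable φ)
    (hφμ : MemLp φ 2 μ)
    (hint : ∀ x, Integrable φ (p x)) (hint' : ∀ x, Integrable φ (p' x))
    (hchar : ∀ π π' : Measure E, IsProbabilityMeasure π → IsProbabilityMeasure π' →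
      (∫ y, φ y ∂π) = (∫ y, φ y ∂π') → π = π')
    (Q : H →L[ℝ] Lp ℝ 2 μ)
    (hQ : ∀ f : H, (Q f : E → ℝ) =ᵐ[μ]
      fun x => (∫ y, ⟪f, φ y⟫ ∂(p x)) - ∫ y, ⟪f, φ y⟫ ∂(p' x)) :
    ‖Q‖ = 0 ↔ μ.compProd p = μ.compProd p' :=
  characteristic_kernel_joint_law_general μ p p' φ hφmeas hint hint' hchar Q hQ
end

section
/- (Well-specified case equivalence) The following are equivalent: (i) the conditional mean embedding F*(·) = E[φ(Y) | X = ·] is an element of the vector-valued RKHS G; (ii) there exists a Hilbert–Schmidt operator A on H such that ⟨f, A*φ(x)⟩_H = E[f(Y) | X = x] for all x ∈ E and f ∈ H. Moreover, either implies the existence of a Hilbert–Schmidt operator A on H with ‖A − P‖_{H→L²(μ)} = 0. -/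
/-!
The identity `⟪Kx x h, Kx x' h'⟫ = ⟪φ x, φ x'⟫ * ⟪h, h'⟫` says that `Kx x h` behaves like the
tensor `h ⊗ φ x`. Since the features span a dense subspace, `φ x ↦ Kx x` extends to a bounded
bilinear `W` with `W u f` playing the role of `f ⊗ u`. For a Hilbert basis `b`, the slices
`u ↦ W u (b i)` are isometries with mutually orthogonal ranges, so `a ↦ ∑ i, W (a i) (b i)` embeds
`ℓ²(ι; H)` isometrically into `G`; as `A` is Hilbert–Schmidt iff `(A (b i))ᵢ ∈ ℓ²`, this gives a
correspondence `⟪A f, u⟫ = ⟪F, W u f⟫` between Hilbert–Schmidt operators and elements of `G`.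
Testing the conditional mean embedding against `f ∈ H` turns (i) and (ii) into the two sides of
this correspondence, and (iii) even holds everywhere.
-/

open MeasureTheory ProbabilityTheory Finsupp
open scoped RealInnerProductSpace

section FeatureExtension

variable {E H G : Type*} [NormedAddCommGroup H] [InnerProductSpace ℝ H]
  [NormedAddCommGroup G] [InnerProductSpace ℝ G] {φ : E → H} {Kx : E → H →L[ℝ] G}

theorem inner_linearCombination_apply_apply
    (hK : ∀ x x' h h', ⟪Kx x h, Kx x' h'⟫ = ⟪φ x, φ x'⟫ * ⟪h, h'⟫) (c d : E →₀ ℝ) (f g : H) :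
    ⟪linearCombination ℝ Kx c f, linearCombination ℝ Kx d g⟫ =
      ⟪linearCombination ℝ φ c, linearCombination ℝ φ d⟫ * ⟪f, g⟫ := by
  simp only [linearCombination_apply, Finsupp.sum, FunLike.coe_sum, Finset.sum_apply,
    FunLike.coe_smul, Pi.smul_apply, sum_inner, inner_sum, real_inner_smul_left,
    real_inner_smul_right, hK, Finset.sum_mul]
  exact Finset.sum_congr rfl fun _ _ => Finset.sum_congr rfl fun _ _ => by ring

theorem norm_linearCombination_le
    (hK : ∀ x x' h h', ⟪Kx x h, Kx x' h'⟫ = ⟪φ x, φ x'⟫ * ⟪h, h'⟫) (c : E →₀ ℝ) :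
    ‖linearCombination ℝ Kx c‖ ≤ ‖linearCombination ℝ φ c‖ := by
  refine ContinuousLinearMap.opNorm_le_bound _ (norm_nonneg _) fun f => le_of_eq ?_
  have h := inner_linearCombination_apply_apply hK c c f f
  simp only [real_inner_self_eq_norm_sq, ← mul_pow] at h
  exact (pow_left_inj₀ (norm_nonneg _) (by positivity) two_ne_zero).1 h

theorem exists_apply_feature_eq [CompleteSpace G]
    (hK : ∀ x x' h h', ⟪Kx x h, Kx x' h'⟫ = ⟪φ x, φ x'⟫ * ⟪h, h'⟫)
    (hφ : Dense (Submodule.span ℝ (Set.range φ) : Set H)) :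
    ∃ W : H →L[ℝ] H →L[ℝ] G, ∀ x, W (φ x) = Kx x := by
  have hdense : DenseRange (linearCombination ℝ φ) := by
    rwa [DenseRange, ← LinearMap.coe_range, range_linearCombination]
  refine ⟨(linearCombination ℝ Kx).extendOfNorm (linearCombination ℝ φ), fun x => ?_⟩
  have h := LinearMap.extendOfNorm_eq hdense
    ⟨1, fun c => (norm_linearCombination_le hK c).trans_eq (one_mul _).symm⟩ (single x 1)
  rwa [linearCombination_single, linearCombination_single, one_smul, one_smul] at h

theorem inner_apply_apply_eq_of_apply_feature_eq
    (hK : ∀ x x' h h', ⟪Kx x h, Kx x' h'⟫ = ⟪φ x, φ x'⟫ * ⟪h, h'⟫)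
    (hφ : Dense (Submodule.span ℝ (Set.range φ) : Set H))
    {W : H →L[ℝ] H →L[ℝ] G} (hW : ∀ x, W (φ x) = Kx x) (u u' f f' : H) :
    ⟪W u f, W u' f'⟫ = ⟪u, u'⟫ * ⟪f, f'⟫ := by
  have feature : ∀ u x, ⟪W u f, Kx x f'⟫ = ⟪u, φ x⟫ * ⟪f, f'⟫ := by
    intro u x
    have : (innerSL ℝ (Kx x f')).comp (W.flip f) = ⟪f, f'⟫ • innerSL ℝ (φ x) := by
      refine ContinuousLinearMap.ext_on hφ ?_
      rintro _ ⟨x', rfl⟩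
      simp [hW, hK, real_inner_comm, mul_comm]
    simpa [real_inner_comm, mul_comm] using congr($this u)
  have : (innerSL ℝ (W u f)).comp (W.flip f') = ⟪f, f'⟫ • innerSL ℝ u := by
    refine ContinuousLinearMap.ext_on hφ ?_
    rintro _ ⟨x, rfl⟩
    simp [hW, feature, mul_comm]
  simpa [mul_comm] using congr($this u')

end FeatureExtension

theorem memℓp_two_iff_summable_sq {ι : Type*} {E : ι → Type*} [∀ i, NormedAddCommGroup (E i)]
    {f : ∀ i, E i} : Memℓp f 2 ↔ Summable fun i => ‖f i‖ ^ 2 := by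
  simp [memℓp_gen_iff (p := 2) (by norm_num)]

theorem ContinuousLinearMap.adjoint_apply_eq_integral_iff {α H G : Type*} [MeasurableSpace α]
    [NormedAddCommGroup H] [InnerProductSpace ℝ H] [CompleteSpace H]
    [NormedAddCommGroup G] [InnerProductSpace ℝ G] [CompleteSpace G]
    {ρ : Measure α} {ψ : α → H} (hψ : Integrable ψ ρ) (T : H →L[ℝ] G) (g : G) :
    adjoint T g = ∫ y, ψ y ∂ρ ↔ ∀ f, ⟪T f, g⟫ = ∫ y, ⟪f, ψ y⟫ ∂ρ := by
  rw [ext_iff_inner_left ℝ]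
  simp_rw [integral_inner hψ, adjoint_inner_right]

section HilbertSchmidt

variable {H₁ H₂ G ι : Type*}
  [NormedAddCommGroup H₁] [InnerProductSpace ℝ H₁]
  [NormedAddCommGroup H₂] [InnerProductSpace ℝ H₂]
  [NormedAddCommGroup G] [InnerProductSpace ℝ G]
  {W : H₁ →L[ℝ] H₂ →L[ℝ] G}

noncomputable def basisSlice (hW : ∀ u u' f f', ⟪W u f, W u' f'⟫ = ⟪u, u'⟫ * ⟪f, f'⟫)
    (b : HilbertBasis ι ℝ H₂) (i : ι) : H₁ →ₗᵢ[ℝ] G :=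
  (W.flip (b i) : H₁ →ₗ[ℝ] G).isometryOfInner fun u u' => by
    simp [hW, b.orthonormal.1 i]

theorem orthogonalFamily_basisSlice (hW : ∀ u u' f f', ⟪W u f, W u' f'⟫ = ⟪u, u'⟫ * ⟪f, f'⟫)
    (b : HilbertBasis ι ℝ H₂) :
    OrthogonalFamily ℝ (fun _ : ι => H₁) (basisSlice hW b) := fun i j hij u u' => by
  simp [basisSlice, hW, b.orthonormal.inner_eq_zero hij]

variable [CompleteSpace G]

noncomputable def tensorIsometry (hW : ∀ u u' f f', ⟪W u f, W u' f'⟫ = ⟪u, u'⟫ * ⟪f, f'⟫)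
    (b : HilbertBasis ι ℝ H₂) : lp (fun _ : ι => H₁) 2 →ₗᵢ[ℝ] G :=
  (orthogonalFamily_basisSlice hW b).linearIsometry

variable [CompleteSpace H₁]

theorem inner_adjoint_tensorIsometry_apply
    (hW : ∀ u u' f f', ⟪W u f, W u' f'⟫ = ⟪u, u'⟫ * ⟪f, f'⟫) (b : HilbertBasis ι ℝ H₂)
    (g : G) (i : ι) (u : H₁) :
    ⟪(tensorIsometry hW b).toContinuousLinearMap.adjoint g i, u⟫ = ⟪g, W u (b i)⟫ := by
  classical
  rw [← lp.inner_single_right, ContinuousLinearMap.adjoint_inner_left]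
  simp [tensorIsometry, basisSlice]

theorem exists_hilbertSchmidt_inner_eq
    (hW : ∀ u u' f f', ⟪W u f, W u' f'⟫ = ⟪u, u'⟫ * ⟪f, f'⟫) (b : HilbertBasis ι ℝ H₂) (g : G) :
    ∃ A : H₂ →L[ℝ] H₁, (Summable fun i => ‖A (b i)‖ ^ 2) ∧ ∀ u f, ⟪A f, u⟫ = ⟪g, W u f⟫ := by
  let A : H₂ →L[ℝ] H₁ :=
    { toFun f := (W.flip f).adjoint g
      map_add' f f' := by simp
      map_smul' c f := by simp
      cont := by fun_prop }
  have hA : ∀ u f, ⟪A f, u⟫ = ⟪g, W u f⟫ := fun u f =>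
    ContinuousLinearMap.adjoint_inner_left (W.flip f) u g
  refine ⟨A, ?_, hA⟩
  have hAb : ∀ i, A (b i) = (tensorIsometry hW b).toContinuousLinearMap.adjoint g i := fun i =>
    ext_inner_right ℝ fun u => by rw [hA, inner_adjoint_tensorIsometry_apply]
  simpa only [hAb] using memℓp_two_iff_summable_sq.1 (lp.memℓp _)

theorem exists_inner_eq_of_hilbertSchmidt [CompleteSpace H₂]
    (hW : ∀ u u' f f', ⟪W u f, W u' f'⟫ = ⟪u, u'⟫ * ⟪f, f'⟫) (b : HilbertBasis ι ℝ H₂)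
    (A : H₂ →L[ℝ] H₁) (hA : Summable fun i => ‖A (b i)‖ ^ 2) :
    ∃ g : G, ∀ u f, ⟪W u f, g⟫ = ⟪A f, u⟫ := by
  let a : lp (fun _ : ι => H₁) 2 := ⟨fun i => A (b i), memℓp_two_iff_summable_sq.2 hA⟩
  refine ⟨tensorIsometry hW b a, fun u f => ?_⟩
  have hg := ((orthogonalFamily_basisSlice hW b).hasSum_linearIsometry a).mapL (innerSL ℝ (W u f))
  rw [← ContinuousLinearMap.adjoint_inner_right A]
  refine hg.unique ?_
  convert b.hasSum_inner_mul_inner f (A.adjoint u) using 2 with i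
  simp [a, basisSlice, hW, ContinuousLinearMap.adjoint_inner_right, real_inner_comm, mul_comm]

end HilbertSchmidt

theorem well_specified_case_general
    {E H G ι : Type*} [MeasurableSpace E]
    [NormedAddCommGroup H] [InnerProductSpace ℝ H] [CompleteSpace H]
    [NormedAddCommGroup G] [InnerProductSpace ℝ G] [CompleteSpace G]
    (μ : Measure E)
    (p : Kernel E E)
    (φ : E → H)
    (hφint : ∀ x, Integrable φ (p x))
    (hφdense : Dense (Submodule.span ℝ (Set.range φ) : Set H))
    (b : HilbertBasis ι ℝ H)
    (Kx : E → H →L[ℝ] G)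
    (hK : ∀ (x x' : E) (h h' : H),
      ⟪Kx x h, Kx x' h'⟫ = ⟪φ x, φ x'⟫ * ⟪h, h'⟫) :
    ((∃ F : G, ∀ x : E,
        ContinuousLinearMap.adjoint (Kx x) F = ∫ y, φ y ∂(p x)) ↔
      (∃ A : H →L[ℝ] H, (Summable fun i => ‖A (b i)‖ ^ 2) ∧
        ∀ (x : E) (f : H),
          ⟪f, ContinuousLinearMap.adjoint A (φ x)⟫ = ∫ y, ⟪f, φ y⟫ ∂(p x))) ∧
    ((∃ F : G, ∀ x : E,
        ContinuousLinearMap.adjoint (Kx x) F = ∫ y, φ y ∂(p x)) →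
      ∃ A : H →L[ℝ] H, (Summable fun i => ‖A (b i)‖ ^ 2) ∧
        ∀ f : H, (fun x => ⟪A f, φ x⟫) =ᵐ[μ] fun x => ∫ y, ⟪f, φ y⟫ ∂(p x)) := by
  obtain ⟨W, hW⟩ := exists_apply_feature_eq hK hφdense
  have hW_inner := inner_apply_apply_eq_of_apply_feature_eq hK hφdense hW
  have mean_iff (x : E) (F : G) := (Kx x).adjoint_apply_eq_integral_iff (hφint x) F
  have forward : ∀ F : G, (∀ x, (Kx x).adjoint F = ∫ y, φ y ∂(p x)) →
      ∃ A : H →L[ℝ] H, (Summable fun i => ‖A (b i)‖ ^ 2) ∧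
        ∀ x f, ⟪A f, φ x⟫ = ∫ y, ⟪f, φ y⟫ ∂(p x) := fun F hF => by
    obtain ⟨A, hA, hAF⟩ := exists_hilbertSchmidt_inner_eq hW_inner b F
    exact ⟨A, hA, fun x f => by rw [hAF, real_inner_comm, hW, (mean_iff x F).1 (hF x)]⟩
  refine ⟨⟨fun ⟨F, hF⟩ => ?_, fun ⟨A, hA, hAφ⟩ => ?_⟩, fun ⟨F, hF⟩ => ?_⟩
  · obtain ⟨A, hA, hAφ⟩ := forward F hF
    exact ⟨A, hA, fun x f => by rw [ContinuousLinearMap.adjoint_inner_right, hAφ]⟩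
  · obtain ⟨F, hF⟩ := exists_inner_eq_of_hilbertSchmidt hW_inner b A hA
    refine ⟨F, fun x => (mean_iff x F).2 fun f => ?_⟩
    rw [← hW, hF, ← hAφ, ContinuousLinearMap.adjoint_inner_right]
  · obtain ⟨A, hA, hAφ⟩ := forward F hF
    exact ⟨A, hA, fun f => .of_forall fun x => hAφ x f⟩

/-- Well-specified case equivalence.  The following are equivalent:
(i) the conditional mean embedding `F*(·) = E[φ(Y)|X = ·] = ∫ φ(y) p(·,dy)` is an
element of the vector-valued RKHS `G` (i.e. some `F ∈ G` evaluates to it everywhere);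
(ii) there is a Hilbert–Schmidt operator `A` on `H` with
`⟨f, A*φ(x)⟩ = E[f(Y)|X = x]` for all `x ∈ E`, `f ∈ H`.
Moreover, either implies (iii): there is a Hilbert–Schmidt operator `A` on `H` with
`‖A − P‖_{H→L²(μ)} = 0`, i.e. `(Af)(·) = E[f(Y)|X = ·]` μ-a.e. for every `f ∈ H`. -/
theorem well_specified_case
    {E H G ι : Type*} [MeasurableSpace E]
    [NormedAddCommGroup H] [InnerProductSpace ℝ H] [CompleteSpace H]
    [NormedAddCommGroup G] [InnerProductSpace ℝ G] [CompleteSpace G]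
    (μ ν : Measure E) [IsProbabilityMeasure μ] [IsProbabilityMeasure ν]
    (p : Kernel E E) [IsMarkovKernel p]
    (hmarg : μ.bind (fun x => p x) = ν)
    (φ : E → H) (hφmeas : StronglyMeasurable φ)
    (hφμ : MemLp φ 2 μ) (hφν : MemLp φ 2 ν)
    (hφint : ∀ x, Integrable φ (p x))
    (hφdense : Dense (Submodule.span ℝ (Set.range φ) : Set H))
    (b : HilbertBasis ι ℝ H)
    (Kx : E → H →L[ℝ] G)
    (hK : ∀ (x x' : E) (h h' : H),
      ⟪Kx x h, Kx x' h'⟫ = ⟪φ x, φ x'⟫ * ⟪h, h'⟫)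
    (hGdense : Dense (Submodule.span ℝ {g : G | ∃ x h, g = Kx x h} : Set G)) :
    ((∃ F : G, ∀ x : E,
        ContinuousLinearMap.adjoint (Kx x) F = ∫ y, φ y ∂(p x)) ↔
      (∃ A : H →L[ℝ] H, (Summable fun i => ‖A (b i)‖ ^ 2) ∧
        ∀ (x : E) (f : H),
          ⟪f, ContinuousLinearMap.adjoint A (φ x)⟫ = ∫ y, ⟪f, φ y⟫ ∂(p x))) ∧
    ((∃ F : G, ∀ x : E,
        ContinuousLinearMap.adjoint (Kx x) F = ∫ y, φ y ∂(p x)) →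
      ∃ A : H →L[ℝ] H, (Summable fun i => ‖A (b i)‖ ^ 2) ∧
        ∀ f : H, (fun x => ⟪A f, φ x⟫) =ᵐ[μ] fun x => ∫ y, ⟪f, φ y⟫ ∂(p x)) :=
  well_specified_case_general μ p φ hφint hφdense b Kx hK
end

section
/- (Noncompactness of the generalized covariance operator) Let k be a measurable kernel with k(x,y) > 0 for all x,y and k(x,x) = 1, inducing an infinite-dimensional separable RKHS H, and let T : G → G, TF = ∫_E K_x K_x* F dμ(x), be the generalized covariance operator on the H-valued RKHS G induced by K = k·Id_H. Then T is not compact: for any fixed x' ∈ E and orthonormal system (e_i) of H, the functions F_i = K_{x'} e_i form an orthonormal system in G and ‖T F_i − T F_j‖²_G = 2M for all i ≠ j, where M = ∬ k(x',x)k(x',y)k(x,y) dμ(x)dμ(y) > 0. -/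
/-!
Since `K_x* K_y = k(y, x) Id`, the operator acts on the sections through `x'` by
`T (K_{x'} h) = ∫ k(x', x) K_x h dμ(x)`, so `⟪T K_{x'} a, T K_{x'} b⟫ = M ⟪a, b⟫`.
Hence `T` maps the orthonormal system `K_{x'} e_i` to an orthogonal system of constant norm
`√M`, which has no convergent subsequence once `M > 0`; and `M = ‖T K_{x'} e_0‖²` is positive
because `⟪T K_{x'} e_0, K_{x'} e_0⟫ = ∫ k(x', x)² dμ > 0`.
-/

open MeasureTheory
open scoped RealInnerProductSpace

theorem not_range_subset_of_isCompact_of_pairwise_le_dist {X : Type*} [MetricSpace X]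
    {u : ℕ → X} {ε : ℝ} (hε : 0 < ε) (hu : Pairwise fun i j => ε ≤ dist (u i) (u j))
    {K : Set X} (hK : IsCompact K) : ¬ Set.range u ⊆ K := by
  intro hsub
  have hcpt : IsCompact (u ⁻¹' K) :=
    (Metric.isClosedEmbedding_of_pairwise_le_dist hε hu).isCompact_preimage hK
  rw [Set.preimage_eq_univ_iff.mpr hsub] at hcpt
  exact Set.infinite_univ hcpt.finite_of_discrete

theorem IsCompactOperator.not_pairwise_le_norm_sub {𝕜 M₁ M₂ : Type*} [NontriviallyNormedField 𝕜]
    [SeminormedAddCommGroup M₁] [NormedSpace 𝕜 M₁] [NormedAddCommGroup M₂] [NormedSpace 𝕜 M₂]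
    {f : M₁ →L[𝕜] M₂} (hf : IsCompactOperator f) {v : ℕ → M₁} {r : ℝ} (hv : ∀ i, ‖v i‖ ≤ r)
    {ε : ℝ} (hε : 0 < ε) : ¬ Pairwise fun i j => ε ≤ ‖f (v i) - f (v j)‖ := by
  intro hsep
  obtain ⟨K, hK, hfK⟩ := hf.image_closedBall_subset_compact (f := (f : M₁ →ₗ[𝕜] M₂)) r
  refine not_range_subset_of_isCompact_of_pairwise_le_dist hε (u := fun i => f (v i))
    (by simpa only [dist_eq_norm] using hsep) hK ?_
  rintro _ ⟨i, rfl⟩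
  exact hfK ⟨v i, by simpa using hv i, rfl⟩

section KernelSection

variable {E H G : Type*}
  [NormedAddCommGroup H] [InnerProductSpace ℝ H] [CompleteSpace H]
  [NormedAddCommGroup G] [InnerProductSpace ℝ G] [CompleteSpace G]
  {φ : E → H} {Kx : E → H →L[ℝ] G}

theorem adjoint_kernelSection_apply
    (hK : ∀ x x' h h', ⟪Kx x h, Kx x' h'⟫ = ⟪φ x, φ x'⟫ * ⟪h, h'⟫) (x y : E) (h : H) :
    ContinuousLinearMap.adjoint (Kx x) (Kx y h) = ⟪φ y, φ x⟫ • h :=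
  ext_inner_right ℝ fun v => by
    rw [ContinuousLinearMap.adjoint_inner_left, hK, real_inner_smul_left]

theorem covariance_integrand_kernelSection
    (hK : ∀ x x' h h', ⟪Kx x h, Kx x' h'⟫ = ⟪φ x, φ x'⟫ * ⟪h, h'⟫) (x' : E) (h : H) :
    (fun x => Kx x (ContinuousLinearMap.adjoint (Kx x) (Kx x' h)))
      = fun x => ⟪φ x', φ x⟫ • Kx x h := by
  simp only [adjoint_kernelSection_apply hK, map_smul]

variable [MeasurableSpace E] {μ : Measure E} {T : G →L[ℝ] G}
  (hK : ∀ x x' h h', ⟪Kx x h, Kx x' h'⟫ = ⟪φ x, φ x'⟫ * ⟪h, h'⟫)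
  (hTint : ∀ F, Integrable (fun x => Kx x (ContinuousLinearMap.adjoint (Kx x) F)) μ)
  (hT : ∀ F, T F = ∫ x, Kx x (ContinuousLinearMap.adjoint (Kx x) F) ∂μ)
include hK hTint

theorem integrable_kernel_smul_kernelSection (x' : E) (h : H) :
    Integrable (fun x => ⟪φ x', φ x⟫ • Kx x h) μ :=
  covariance_integrand_kernelSection hK x' h ▸ hTint (Kx x' h)

include hT

theorem inner_covariance_kernelSection_left (x' : E) (h : H) (g : G) :
    ⟪T (Kx x' h), g⟫ = ∫ x, ⟪φ x', φ x⟫ * ⟪Kx x h, g⟫ ∂μ := by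
  rw [hT, covariance_integrand_kernelSection hK, real_inner_comm,
    ← integral_inner (integrable_kernel_smul_kernelSection hK hTint x' h)]
  simp only [real_inner_smul_right, real_inner_comm g]

theorem inner_covariance_kernelSection (x' : E) (a b : H) :
    ⟪T (Kx x' a), T (Kx x' b)⟫
      = (∫ x, ∫ y, ⟪φ x', φ x⟫ * ⟪φ x', φ y⟫ * ⟪φ x, φ y⟫ ∂μ ∂μ) * ⟪a, b⟫ := by
  rw [inner_covariance_kernelSection_left hK hTint hT, ← integral_mul_const]
  congr 1 with x
  rw [real_inner_comm (T _), inner_covariance_kernelSection_left hK hTint hT, ← integral_mul_const,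
    ← integral_const_mul]
  congr 1 with y
  rw [hK, real_inner_comm (φ x) (φ y), real_inner_comm a b]
  ring

theorem inner_covariance_kernelSection_self_pos [NeZero μ] (hkpos : ∀ x y, 0 < ⟪φ x, φ y⟫)
    (x' : E) {h : H} (hh : h ≠ 0) : 0 < ⟪T (Kx x' h), Kx x' h⟫ := by
  have hint : Integrable (fun x => ⟪φ x', φ x⟫ * ⟪Kx x h, Kx x' h⟫) μ := by
    simpa only [real_inner_smul_left] using
      (integrable_kernel_smul_kernelSection hK hTint x' h).inner_const (𝕜 := ℝ) (Kx x' h)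
  have hpos : ∀ x, 0 < ⟪φ x', φ x⟫ * ⟪Kx x h, Kx x' h⟫ := fun x => by
    rw [hK]
    exact mul_pos (hkpos x' x) (mul_pos (hkpos x x') (real_inner_self_pos.mpr hh))
  rw [inner_covariance_kernelSection_left hK hTint hT,
    integral_pos_iff_support_of_nonneg (fun x => (hpos x).le) hint,
    Function.support_eq_univ fun x => (hpos x).ne']
  exact Measure.measure_univ_pos.mpr (NeZero.ne μ)

end KernelSection

theorem generalized_covariance_operator_not_compact_general
    {E H G : Type*} [MeasurableSpace E]
    [NormedAddCommGroup H] [InnerProductSpace ℝ H] [CompleteSpace H]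
    [NormedAddCommGroup G] [InnerProductSpace ℝ G] [CompleteSpace G]
    (μ : Measure E) [IsProbabilityMeasure μ]
    (φ : E → H)
    (hkpos : ∀ x y : E, 0 < ⟪φ x, φ y⟫)
    (hknorm : ∀ x : E, ⟪φ x, φ x⟫ = 1)
    (Kx : E → H →L[ℝ] G)
    (hK : ∀ (x x' : E) (h h' : H),
      ⟪Kx x h, Kx x' h'⟫ = ⟪φ x, φ x'⟫ * ⟪h, h'⟫)
    (T : G →L[ℝ] G)
    (hTint : ∀ F : G,
      Integrable (fun x => Kx x (ContinuousLinearMap.adjoint (Kx x) F)) μ)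
    (hT : ∀ F : G,
      T F = ∫ x, Kx x (ContinuousLinearMap.adjoint (Kx x) F) ∂μ)
    (x' : E) (e : ℕ → H) (he : Orthonormal ℝ e)
    (M : ℝ)
    (hM : M = ∫ x, ∫ y, ⟪φ x', φ x⟫ * ⟪φ x', φ y⟫ * ⟪φ x, φ y⟫ ∂μ ∂μ) :
    Orthonormal ℝ (fun i => Kx x' (e i)) ∧
    (∀ i j : ℕ, i ≠ j →
      ‖T (Kx x' (e i)) - T (Kx x' (e j))‖ ^ 2 = 2 * M) ∧
    0 < M ∧
    ¬ IsCompactOperator (T : G → G) := by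
  have he_inner := orthonormal_iff_ite.mp he
  have hON : Orthonormal ℝ (fun i => Kx x' (e i)) :=
    orthonormal_iff_ite.mpr fun i j => by rw [hK, hknorm, one_mul, he_inner]
  have hTT (i j : ℕ) : ⟪T (Kx x' (e i)), T (Kx x' (e j))⟫ = M * ⟪e i, e j⟫ :=
    hM ▸ inner_covariance_kernelSection hK hTint hT x' (e i) (e j)
  have hsep (i j : ℕ) (hij : i ≠ j) : ‖T (Kx x' (e i)) - T (Kx x' (e j))‖ ^ 2 = 2 * M := by
    rw [norm_sub_sq_real, ← real_inner_self_eq_norm_sq, ← real_inner_self_eq_norm_sq]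
    simp only [hTT, he_inner, hij, if_true, if_false]
    ring
  have hMpos : 0 < M := by
    have hTF : T (Kx x' (e 0)) ≠ 0 := fun h0 => by
      simpa [h0] using inner_covariance_kernelSection_self_pos hK hTint hT hkpos x' (he.ne_zero 0)
    simpa only [hTT, he_inner, if_pos, mul_one] using real_inner_self_pos.mpr hTF
  refine ⟨hON, hsep, hMpos, fun hc => ?_⟩
  refine hc.not_pairwise_le_norm_sub (fun i => (hON.1 i).le)
    (Real.sqrt_pos.mpr (by linarith : 0 < 2 * M)) fun i j hij => ?_
  rw [← hsep i j hij, Real.sqrt_sq (norm_nonneg _)]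

/-- Noncompactness of the generalized covariance operator.  Let `k(x,y) = ⟪φ x, φ y⟫`
be a measurable kernel with `k(x,y) > 0` and `k(x,x) = 1`, and let
`T : G → G`, `TF = ∫ K_x K_x* F dμ(x)`, be the generalized covariance operator on the
`H`-valued RKHS `G` induced by `K = k·Id_H`.  Then, for any fixed `x' ∈ E` and
orthonormal system `(e_i)_{i∈ℕ}` of `H`, the functions `F_i = K_{x'} e_i` form an
orthonormal system in `G` and `‖T F_i − T F_j‖² = 2M` for `i ≠ j`, where
`M = ∬ k(x',x) k(x',y) k(x,y) dμ(x) dμ(y) > 0`; in particular `T` is not compact. -/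
theorem generalized_covariance_operator_not_compact
    {E H G : Type*} [MeasurableSpace E]
    [NormedAddCommGroup H] [InnerProductSpace ℝ H] [CompleteSpace H]
    [NormedAddCommGroup G] [InnerProductSpace ℝ G] [CompleteSpace G]
    (μ : Measure E) [IsProbabilityMeasure μ]
    (φ : E → H) (hφmeas : StronglyMeasurable φ)
    (hkpos : ∀ x y : E, 0 < ⟪φ x, φ y⟫)
    (hknorm : ∀ x : E, ⟪φ x, φ x⟫ = 1)
    (Kx : E → H →L[ℝ] G)
    (hK : ∀ (x x' : E) (h h' : H),
      ⟪Kx x h, Kx x' h'⟫ = ⟪φ x, φ x'⟫ * ⟪h, h'⟫)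
    (hGdense : Dense (Submodule.span ℝ {g : G | ∃ x h, g = Kx x h} : Set G))
    (T : G →L[ℝ] G)
    (hTint : ∀ F : G,
      Integrable (fun x => Kx x (ContinuousLinearMap.adjoint (Kx x) F)) μ)
    (hT : ∀ F : G,
      T F = ∫ x, Kx x (ContinuousLinearMap.adjoint (Kx x) F) ∂μ)
    (x' : E) (e : ℕ → H) (he : Orthonormal ℝ e)
    (M : ℝ)
    (hM : M = ∫ x, ∫ y, ⟪φ x', φ x⟫ * ⟪φ x', φ y⟫ * ⟪φ x, φ y⟫ ∂μ ∂μ) :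
    Orthonormal ℝ (fun i => Kx x' (e i)) ∧
    (∀ i j : ℕ, i ≠ j →
      ‖T (Kx x' (e i)) - T (Kx x' (e j))‖ ^ 2 = 2 * M) ∧
    0 < M ∧
    ¬ IsCompactOperator (T : G → G) :=
  generalized_covariance_operator_not_compact_general μ φ hkpos hknorm Kx hK T hTint hT x' e he M hM
end

section
/- (Duality of T and Ξ_{C_XX}) Let F ∈ G and A = Θ⁻¹(F) ∈ HS(H) its operator representation, so F = Aφ(·). Then Θ⁻¹(TF) = A·C_XX and Θ⁻¹((T + λ Id_G)F) = A·(C_XX + λ Id_H) for all λ > 0, where C_XX = ∫_E φ(x) ⊗ φ(x) dμ(x) is the kernel covariance operator. -/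
open MeasureTheory
open scoped RealInnerProductSpace

/-! Pairing `Kₓ₀* (TF)` with `h` and moving the inner product under the integral, the kernel
identity turns it into `∫ k(x₀, x) ⟪A* h, φ x⟫ dμ`, which is `⟪A* h, C φ(x₀)⟫` by the defining
property of `C`, i.e. `⟪h, A C φ(x₀)⟫`. -/

section KernelIntegral

variable {E H G : Type*} [MeasurableSpace E]
  [NormedAddCommGroup H] [InnerProductSpace ℝ H] [CompleteSpace H]
  [NormedAddCommGroup G] [InnerProductSpace ℝ G] [CompleteSpace G]
  {μ : Measure E} {φ : E → H} {Kx : E → H →L[ℝ] G}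

theorem inner_adjoint_integral_kernel
    (hK : ∀ (x x' : E) (h h' : H), ⟪Kx x h, Kx x' h'⟫ = ⟪φ x, φ x'⟫ * ⟪h, h'⟫)
    {v : E → H} (hv : Integrable (fun x => Kx x (v x)) μ) (x₀ : E) (h : H) :
    ⟪h, (Kx x₀).adjoint (∫ x, Kx x (v x) ∂μ)⟫ = ∫ x, ⟪φ x₀, φ x⟫ * ⟪h, v x⟫ ∂μ := by
  rw [ContinuousLinearMap.adjoint_inner_right, ← integral_inner hv]
  simp only [hK]

theorem adjoint_integral_kernel_comp_eq_comp_covariance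
    (hK : ∀ (x x' : E) (h h' : H), ⟪Kx x h, Kx x' h'⟫ = ⟪φ x, φ x'⟫ * ⟪h, h'⟫)
    {C : H →L[ℝ] H} (hC : ∀ f h : H, ⟪h, C f⟫ = ∫ x, ⟪f, φ x⟫ * ⟪h, φ x⟫ ∂μ)
    {A : H →L[ℝ] H} (hA : Integrable (fun x => Kx x (A (φ x))) μ) (x₀ : E) :
    (Kx x₀).adjoint (∫ x, Kx x (A (φ x)) ∂μ) = A (C (φ x₀)) := by
  refine ext_inner_left ℝ fun h => ?_
  calc ⟪h, (Kx x₀).adjoint (∫ x, Kx x (A (φ x)) ∂μ)⟫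
      = ∫ x, ⟪φ x₀, φ x⟫ * ⟪A.adjoint h, φ x⟫ ∂μ := by
        simp only [inner_adjoint_integral_kernel hK hA, ContinuousLinearMap.adjoint_inner_left]
    _ = ⟪h, A (C (φ x₀))⟫ := by
        rw [← hC, ContinuousLinearMap.adjoint_inner_left]

end KernelIntegral

theorem duality_T_composition_general
    {E H G : Type*} [MeasurableSpace E]
    [NormedAddCommGroup H] [InnerProductSpace ℝ H] [CompleteSpace H]
    [NormedAddCommGroup G] [InnerProductSpace ℝ G] [CompleteSpace G]
    (μ : Measure E)
    (φ : E → H)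
    (Kx : E → H →L[ℝ] G)
    (hK : ∀ (x x' : E) (h h' : H),
      ⟪Kx x h, Kx x' h'⟫ = ⟪φ x, φ x'⟫ * ⟪h, h'⟫)
    (T : G →L[ℝ] G)
    (hTint : ∀ F : G,
      Integrable (fun x => Kx x (ContinuousLinearMap.adjoint (Kx x) F)) μ)
    (hT : ∀ F : G,
      T F = ∫ x, Kx x (ContinuousLinearMap.adjoint (Kx x) F) ∂μ)
    (C : H →L[ℝ] H)
    (hC : ∀ f h : H, ⟪h, C f⟫ = ∫ x, ⟪f, φ x⟫ * ⟪h, φ x⟫ ∂μ)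
    (F : G) (A : H →L[ℝ] H)
    (hFA : ∀ x : E, ContinuousLinearMap.adjoint (Kx x) F = A (φ x))
    (lam : ℝ) :
    (∀ x : E,
      ContinuousLinearMap.adjoint (Kx x) (T F) = (A.comp C) (φ x)) ∧
    (∀ x : E,
      ContinuousLinearMap.adjoint (Kx x) (T F + lam • F)
        = (A.comp (C + lam • ContinuousLinearMap.id ℝ H)) (φ x)) := by
  have hTF : ∀ x, (Kx x).adjoint (T F) = A (C (φ x)) := by
    have hInt : Integrable (fun x => Kx x (A (φ x))) μ := by simpa only [hFA] using hTint F
    simpa only [hT F, hFA] using adjoint_integral_kernel_comp_eq_comp_covariance hK hC hInt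
  refine ⟨hTF, fun x => ?_⟩
  simp only [map_add, map_smul, hTF, hFA, ContinuousLinearMap.comp_apply,
    add_apply, smul_apply, ContinuousLinearMap.id_apply]

/-- Duality of the generalized covariance operator `T` on `G` and the
right-composition operator `Ξ_{C_XX}` on `HS(H)`.  If `F ∈ G` corresponds under `Θ` to
the Hilbert–Schmidt operator `A`, i.e. `F(x) = Kₓ* F = A φ(x)` for all `x`, then
`Θ⁻¹(TF) = A ∘ C_XX` and `Θ⁻¹((T + λ Id_G)F) = A ∘ (C_XX + λ Id_H)`, expressed here
through evaluations. -/
theorem duality_T_composition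
    {E H G : Type*} [MeasurableSpace E]
    [NormedAddCommGroup H] [InnerProductSpace ℝ H] [CompleteSpace H]
    [NormedAddCommGroup G] [InnerProductSpace ℝ G] [CompleteSpace G]
    (μ : Measure E) [IsProbabilityMeasure μ]
    (φ : E → H) (hφmeas : StronglyMeasurable φ) (hφμ : MemLp φ 2 μ)
    (Kx : E → H →L[ℝ] G)
    (hK : ∀ (x x' : E) (h h' : H),
      ⟪Kx x h, Kx x' h'⟫ = ⟪φ x, φ x'⟫ * ⟪h, h'⟫)
    (hGdense : Dense (Submodule.span ℝ {g : G | ∃ x h, g = Kx x h} : Set G))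
    (T : G →L[ℝ] G)
    (hTint : ∀ F : G,
      Integrable (fun x => Kx x (ContinuousLinearMap.adjoint (Kx x) F)) μ)
    (hT : ∀ F : G,
      T F = ∫ x, Kx x (ContinuousLinearMap.adjoint (Kx x) F) ∂μ)
    (C : H →L[ℝ] H)
    (hC : ∀ f h : H, ⟪h, C f⟫ = ∫ x, ⟪f, φ x⟫ * ⟪h, φ x⟫ ∂μ)
    (F : G) (A : H →L[ℝ] H)
    (hFA : ∀ x : E, ContinuousLinearMap.adjoint (Kx x) F = A (φ x))
    (lam : ℝ) (hlam : 0 < lam) :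
    (∀ x : E,
      ContinuousLinearMap.adjoint (Kx x) (T F) = (A.comp C) (φ x)) ∧
    (∀ x : E,
      ContinuousLinearMap.adjoint (Kx x) (T F + lam • F)
        = (A.comp (C + lam • ContinuousLinearMap.id ℝ H)) (φ x)) :=
  duality_T_composition_general μ φ Kx hK T hTint hT C hC F A hFA lam
end

section
/- (Closed form Tikhonov solution) The Tikhonov–Phillips regularized solution F_λ = (T + λ Id_G)⁻¹ I_μ* F* ∈ G corresponds under the isomorphism Θ to the operator C_YX (C_XX + λ Id_H)⁻¹; equivalently, the regularized operator solution is A_λ = (C_XX + λ Id_H)⁻¹ C_XY. -/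
/-!
Both `x ↦ (K x)† F_λ` and `x ↦ C_YX (C_XX + λ)⁻¹ φ(x)` are square-integrable solutions of the
Fredholm equation `λ v(x) + ∫ k(x, x') v(x') dμ(x') = C_YX φ(x)`, where `k(x, x') = ⟪φ x, φ x'⟫`:
the first by applying `(K x)†` to `(T + λ) F_λ = I_μ* F*`, the second because
`∫ k(x, x') φ(x') dμ(x') = C_XX φ(x)`. The equation has at most one such solution: if a scalar
`w ∈ L²(μ)` solves the homogeneous equation, then `v = ∫ w φ dμ` satisfies `(C_XX + λ) v = 0`,
so `v = 0`, and then `w = -λ⁻¹ ⟪φ, v⟫ = 0`.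
-/

open MeasureTheory ProbabilityTheory
open scoped RealInnerProductSpace ENNReal NNReal

section SquareIntegrable

variable {α β F : Type*} [MeasurableSpace α] [MeasurableSpace β]
  [NormedAddCommGroup F] [NormedSpace ℝ F]

lemma integrable_smul_of_memLp_two {μ : Measure α} {c : α → ℝ} {v : α → F}
    (hc : MemLp c 2 μ) (hv : MemLp v 2 μ) : Integrable (fun x => c x • v x) μ :=
  memLp_one_iff_integrable.1 (hv.smul hc)

lemma enorm_integral_rpow_two_le_lintegral {ν : Measure β} [IsProbabilityMeasure ν] {f : β → F}
    (hf : AEStronglyMeasurable f ν) :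
    ‖∫ y, f y ∂ν‖ₑ ^ (2 : ℝ) ≤ ∫⁻ y, ‖f y‖ₑ ^ (2 : ℝ) ∂ν := by
  have h : ‖∫ y, f y ∂ν‖ₑ ≤ eLpNorm f (2 : ℝ≥0) ν :=
    calc ‖∫ y, f y ∂ν‖ₑ ≤ eLpNorm f 1 ν := by
          rw [eLpNorm_one_eq_lintegral_enorm]; exact enorm_integral_le_lintegral_enorm f
      _ ≤ eLpNorm f (2 : ℝ≥0) ν := eLpNorm_le_eLpNorm_of_exponent_le (by norm_num) hf
  simpa using (ENNReal.rpow_le_rpow h zero_le_two).trans_eq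
    (eLpNorm_nnreal_pow_eq_lintegral two_ne_zero)

lemma memLp_two_integral_kernel {μ : Measure α} {κ : Kernel α β} [IsMarkovKernel κ] {f : β → F}
    (hf : StronglyMeasurable f) (hf2 : MemLp f 2 (μ.bind κ)) :
    MemLp (fun x => ∫ y, f y ∂κ x) 2 μ := by
  refine ⟨hf.integral_kernel.aestronglyMeasurable, ?_⟩
  rw [eLpNorm_lt_top_iff_lintegral_rpow_enorm_lt_top two_ne_zero ENNReal.ofNat_ne_top]
  have hbind := lintegral_rpow_enorm_lt_top_of_eLpNorm_lt_top two_ne_zero ENNReal.ofNat_ne_top hf2.2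
  rw [Measure.lintegral_bind κ.measurable.aemeasurable (hf.enorm.pow_const _).aemeasurable] at hbind
  calc _ ≤ ∫⁻ x, ∫⁻ y, ‖f y‖ₑ ^ (2 : ℝ) ∂κ x ∂μ :=
        lintegral_mono fun x => enorm_integral_rpow_two_le_lintegral hf.aestronglyMeasurable
    _ < ∞ := by simpa using hbind

end SquareIntegrable

section FredholmEquation

variable {E H : Type*} [MeasurableSpace E] [NormedAddCommGroup H] [InnerProductSpace ℝ H]
  [CompleteSpace H] {μ : Measure E}

lemma eq_integral_smul_of_inner_eq {a : H} {c : E → ℝ} {ψ : E → H}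
    (hint : Integrable (fun x => c x • ψ x) μ) (ha : ∀ h, ⟪h, a⟫ = ∫ x, c x * ⟪h, ψ x⟫ ∂μ) :
    a = ∫ x, c x • ψ x ∂μ :=
  ext_inner_left ℝ fun h => by
    simp only [ha, ← integral_inner hint, real_inner_smul_right]

lemma eq_zero_of_mul_add_integral_inner_mul_eq_zero {φ : E → H} (hφ : MemLp φ 2 μ)
    {C : H →L[ℝ] H} (hC : ∀ f h : H, ⟪h, C f⟫ = ∫ x, ⟪f, φ x⟫ * ⟪h, φ x⟫ ∂μ)
    {lam : ℝ} (hlam : lam ≠ 0) (hinj : Function.Injective (C + lam • ContinuousLinearMap.id ℝ H))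
    {w : E → ℝ} (hw : MemLp w 2 μ)
    (heq : ∀ x, lam * w x + ∫ x', ⟪φ x, φ x'⟫ * w x' ∂μ = 0) (x : E) : w x = 0 := by
  set v := ∫ x', w x' • φ x' ∂μ
  have hwφ : ∀ x, lam * w x = -⟪φ x, v⟫ := fun x => by
    rw [← integral_inner (integrable_smul_of_memLp_two hw hφ)]
    simp only [real_inner_smul_right, mul_comm (w _)]
    linarith [heq x]
  have hCv : C v = -lam • v := by
    rw [eq_integral_smul_of_inner_eq (integrable_smul_of_memLp_two (hφ.const_inner v) hφ) (hC v),
      ← integral_smul]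
    congr 1 with x'
    rw [real_inner_comm, ← neg_eq_iff_eq_neg.2 (hwφ x'), smul_smul, neg_mul]
  have hv : v = 0 := hinj (by simp [hCv])
  simpa [hv, hlam] using hwφ x

lemma eq_of_smul_add_integral_inner_smul_eq {φ : E → H} (hφ : MemLp φ 2 μ)
    {C : H →L[ℝ] H} (hC : ∀ f h : H, ⟪h, C f⟫ = ∫ x, ⟪f, φ x⟫ * ⟪h, φ x⟫ ∂μ)
    {lam : ℝ} (hlam : lam ≠ 0) (hinj : Function.Injective (C + lam • ContinuousLinearMap.id ℝ H))
    {u g b : E → H} (hu : MemLp u 2 μ) (hg : MemLp g 2 μ)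
    (hu_eq : ∀ x, lam • u x + ∫ x', ⟪φ x, φ x'⟫ • u x' ∂μ = b x)
    (hg_eq : ∀ x, lam • g x + ∫ x', ⟪φ x, φ x'⟫ • g x' ∂μ = b x) : u = g := by
  funext x
  refine ext_inner_left ℝ fun h => sub_eq_zero.1 ?_
  have hint : ∀ {v : E → H}, MemLp v 2 μ → ∀ y,
      Integrable (fun x' => ⟪φ y, φ x'⟫ * ⟪h, v x'⟫) μ := fun hv y =>
    integrable_smul_of_memLp_two (hφ.const_inner _) (hv.const_inner h)
  refine eq_zero_of_mul_add_integral_inner_mul_eq_zero hφ hC hlam hinj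
    ((hu.const_inner h).sub (hg.const_inner h)) (fun y => ?_) x
  have hy := congrArg (⟪h, ·⟫) ((hu_eq y).trans (hg_eq y).symm)
  simp only [inner_add_right, real_inner_smul_right, ← integral_inner
    (integrable_smul_of_memLp_two (hφ.const_inner _) hu),
    ← integral_inner (integrable_smul_of_memLp_two (hφ.const_inner _) hg)] at hy
  simp only [Pi.sub_apply, mul_sub, integral_sub (hint hu y) (hint hg y)]
  linarith

end FredholmEquation

section FeatureOperators

variable {E H G : Type*} [NormedAddCommGroup H] [InnerProductSpace ℝ H]
  [CompleteSpace H] [NormedAddCommGroup G] [InnerProductSpace ℝ G] [CompleteSpace G]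
  {φ : E → H} {Kx : E → H →L[ℝ] G}

lemma adjoint_apply_apply_eq_inner_smul
    (hK : ∀ (x x' : E) (h h' : H), ⟪Kx x h, Kx x' h'⟫ = ⟪φ x, φ x'⟫ * ⟪h, h'⟫)
    (x x' : E) (h : H) : (Kx x).adjoint (Kx x' h) = ⟪φ x, φ x'⟫ • h :=
  ext_inner_right ℝ fun v => by
    rw [ContinuousLinearMap.adjoint_inner_left, hK, real_inner_smul_left, real_inner_comm (φ x')]

lemma norm_adjoint_apply_le
    (hK : ∀ (x x' : E) (h h' : H), ⟪Kx x h, Kx x' h'⟫ = ⟪φ x, φ x'⟫ * ⟪h, h'⟫)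
    (x : E) (F : G) : ‖(Kx x).adjoint F‖ ≤ ‖F‖ * ‖φ x‖ := by
  have hnorm : ∀ h, ‖Kx x h‖ = ‖φ x‖ * ‖h‖ := fun h => by
    have := hK x x h h
    rw [real_inner_self_eq_norm_sq, real_inner_self_eq_norm_sq, real_inner_self_eq_norm_sq,
      ← mul_pow] at this
    exact (pow_left_inj₀ (norm_nonneg _) (by positivity) two_ne_zero).1 this
  calc ‖(Kx x).adjoint F‖ ≤ ‖(Kx x).adjoint‖ * ‖F‖ := ContinuousLinearMap.le_opNorm _ _
    _ = ‖Kx x‖ * ‖F‖ := by rw [ContinuousLinearMap.adjoint.norm_map]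
    _ ≤ ‖φ x‖ * ‖F‖ := by
      gcongr
      exact ContinuousLinearMap.opNorm_le_bound _ (norm_nonneg _) fun h => (hnorm h).le
    _ = ‖F‖ * ‖φ x‖ := mul_comm _ _

variable [MeasurableSpace E]

lemma stronglyMeasurable_adjoint_apply
    (hK : ∀ (x x' : E) (h h' : H), ⟪Kx x h, Kx x' h'⟫ = ⟪φ x, φ x'⟫ * ⟪h, h'⟫)
    (hdense : Dense (Submodule.span ℝ {g : G | ∃ x h, g = Kx x h} : Set G))
    (hφ : StronglyMeasurable φ) (F : G) :
    StronglyMeasurable fun x => (Kx x).adjoint F := by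
  have hspan : ∀ F' ∈ Submodule.span ℝ {g : G | ∃ x h, g = Kx x h},
      StronglyMeasurable fun x => (Kx x).adjoint F' := by
    intro F' hF'
    induction hF' using Submodule.span_induction with
    | mem g hg =>
      obtain ⟨x', h, rfl⟩ := hg
      simp only [adjoint_apply_apply_eq_inner_smul hK]
      exact (hφ.inner stronglyMeasurable_const).smul_const h
    | zero => simpa using stronglyMeasurable_const
    | add a b _ _ ha hb => simp only [map_add]; exact ha.add hb
    | smul c a _ ha => simp only [map_smul]; exact ha.const_smul c
  obtain ⟨Fn, hFn, hlim⟩ := mem_closure_iff_seq_limit.1 (hdense F)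
  exact stronglyMeasurable_of_tendsto _ (fun n => hspan _ (hFn n))
    (tendsto_pi_nhds.2 fun x => ((Kx x).adjoint.continuous.tendsto F).comp hlim)

lemma memLp_adjoint_apply
    (hK : ∀ (x x' : E) (h h' : H), ⟪Kx x h, Kx x' h'⟫ = ⟪φ x, φ x'⟫ * ⟪h, h'⟫)
    (hdense : Dense (Submodule.span ℝ {g : G | ∃ x h, g = Kx x h} : Set G))
    (hφ : StronglyMeasurable φ) {p : ℝ≥0∞} {μ : Measure E} (hφp : MemLp φ p μ) (F : G) :
    MemLp (fun x => (Kx x).adjoint F) p μ :=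
  hφp.of_le_mul (stronglyMeasurable_adjoint_apply hK hdense hφ F).aestronglyMeasurable
    (ae_of_all _ (norm_adjoint_apply_le hK · F))

lemma adjoint_apply_integral_apply_adjoint_apply
    (hK : ∀ (x x' : E) (h h' : H), ⟪Kx x h, Kx x' h'⟫ = ⟪φ x, φ x'⟫ * ⟪h, h'⟫)
    {μ : Measure E} {F : G} (hint : Integrable (fun x' => Kx x' ((Kx x').adjoint F)) μ) (x : E) :
    (Kx x).adjoint (∫ x', Kx x' ((Kx x').adjoint F) ∂μ)
      = ∫ x', ⟪φ x, φ x'⟫ • (Kx x').adjoint F ∂μ := by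
  simp only [← ContinuousLinearMap.integral_comp_comm _ hint, adjoint_apply_apply_eq_inner_smul hK]

end FeatureOperators

theorem closed_form_tikhonov_solution_general
    {E H G : Type*} [MeasurableSpace E]
    [NormedAddCommGroup H] [InnerProductSpace ℝ H] [CompleteSpace H]
    [NormedAddCommGroup G] [InnerProductSpace ℝ G] [CompleteSpace G]
    (μ ν : Measure E)
    (p : Kernel E E) [IsMarkovKernel p]
    (hmarg : μ.bind (fun x => p x) = ν)
    (φ : E → H) (hφmeas : StronglyMeasurable φ)
    (hφμ : MemLp φ 2 μ) (hφν : MemLp φ 2 ν)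
    (hφint : ∀ x, Integrable φ (p x))
    (Kx : E → H →L[ℝ] G)
    (hK : ∀ (x x' : E) (h h' : H),
      ⟪Kx x h, Kx x' h'⟫ = ⟪φ x, φ x'⟫ * ⟪h, h'⟫)
    (hGdense : Dense (Submodule.span ℝ {g : G | ∃ x h, g = Kx x h} : Set G))
    (T : G →L[ℝ] G)
    (hTint : ∀ F : G,
      Integrable (fun x => Kx x (ContinuousLinearMap.adjoint (Kx x) F)) μ)
    (hT : ∀ F : G,
      T F = ∫ x, Kx x (ContinuousLinearMap.adjoint (Kx x) F) ∂μ)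
    (C : H →L[ℝ] H)
    (hC : ∀ f h : H, ⟪h, C f⟫ = ∫ x, ⟪f, φ x⟫ * ⟪h, φ x⟫ ∂μ)
    (Cyx : H →L[ℝ] H)
    (hCyx : ∀ f h : H,
      ⟪h, Cyx f⟫ = ∫ x, ∫ y, ⟪f, φ x⟫ * ⟪h, φ y⟫ ∂(p x) ∂μ)
    (lam : ℝ) (hlam : 0 < lam)
    (Binv : H →L[ℝ] H)
    (hBinv2 : Binv.comp (C + lam • ContinuousLinearMap.id ℝ H)
      = ContinuousLinearMap.id ℝ H)
    (Gstar : G)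
    (hGstar : ∀ x : E, ContinuousLinearMap.adjoint (Kx x) Gstar
      = ∫ x', ⟪φ x, φ x'⟫ • (∫ y, φ y ∂(p x')) ∂μ)
    (Flam : G)
    (hFlam : T Flam + lam • Flam = Gstar) :
    ∀ x : E, ContinuousLinearMap.adjoint (Kx x) Flam = (Cyx.comp Binv) (φ x) := by
  set A := Cyx.comp Binv
  have hkint : ∀ {v : E → H}, MemLp v 2 μ → ∀ x,
      Integrable (fun x' => ⟪φ x, φ x'⟫ • v x') μ := fun hv x =>
    integrable_smul_of_memLp_two (hφμ.const_inner (φ x)) hv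
  have hm : MemLp (fun x' => ∫ y, φ y ∂p x') 2 μ :=
    memLp_two_integral_kernel hφmeas (hmarg ▸ hφν)
  have hCφ : ∀ x, C (φ x) = ∫ x', ⟪φ x, φ x'⟫ • φ x' ∂μ := fun x =>
    eq_integral_smul_of_inner_eq (hkint hφμ x) (hC (φ x))
  have hCyxφ : ∀ x, Cyx (φ x) = ∫ x', ⟪φ x, φ x'⟫ • ∫ y, φ y ∂p x' ∂μ := fun x =>
    eq_integral_smul_of_inner_eq (hkint hm x) fun h => by
      simp only [hCyx, integral_inner (hφint _), integral_const_mul]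
  have hinj : Function.Injective (C + lam • ContinuousLinearMap.id ℝ H) :=
    Function.LeftInverse.injective (g := Binv) fun v => congrArg (· v) hBinv2
  have hsol : ∀ x, lam • (Kx x).adjoint Flam
      + ∫ x', ⟪φ x, φ x'⟫ • (Kx x').adjoint Flam ∂μ = Cyx (φ x) := fun x => by
    rw [hCyxφ, ← hGstar, ← hFlam, map_add, map_smul, hT,
      adjoint_apply_integral_apply_adjoint_apply hK (hTint Flam), add_comm]
  have hcand : ∀ x, lam • A (φ x) + ∫ x', ⟪φ x, φ x'⟫ • A (φ x') ∂μ = Cyx (φ x) := fun x => by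
    simp_rw [← map_smul A]
    rw [A.integral_comp_comm (hkint hφμ x), ← map_add, ← hCφ, add_comm]
    exact congrArg Cyx (congrArg (· (φ x)) hBinv2)
  exact congrFun (eq_of_smul_add_integral_inner_smul_eq hφμ hC hlam.ne' hinj
    (memLp_adjoint_apply hK hGdense hφmeas hφμ Flam) (A.comp_memLp' hφμ) hsol hcand)

/-- Closed form of the Tikhonov–Phillips regularized solution.  Let `F_λ ∈ G` solve
`(T + λ Id_G) F_λ = I_μ* F*`, where `I_μ* F*` is the element `Gstar ∈ G` with
evaluations `(I_μ* F*)(x) = ∫ k(x,x') F*(x') dμ(x')`, `F*(x') = ∫ φ(y) p(x',dy)` being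
the conditional mean embedding.  Then under the isomorphism `Θ`, `F_λ` corresponds to
the operator `C_YX ∘ (C_XX + λ Id_H)⁻¹`; i.e. `F_λ(x) = C_YX ((C_XX + λ)⁻¹ φ(x))`
for all `x` (equivalently, the regularized operator solution is
`A_λ = (C_XX + λ Id_H)⁻¹ C_XY`). -/
theorem closed_form_tikhonov_solution
    {E H G : Type*} [MeasurableSpace E]
    [NormedAddCommGroup H] [InnerProductSpace ℝ H] [CompleteSpace H]
    [NormedAddCommGroup G] [InnerProductSpace ℝ G] [CompleteSpace G]
    (μ ν : Measure E) [IsProbabilityMeasure μ] [IsProbabilityMeasure ν]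
    (p : Kernel E E) [IsMarkovKernel p]
    (hmarg : μ.bind (fun x => p x) = ν)
    (φ : E → H) (hφmeas : StronglyMeasurable φ)
    (hφμ : MemLp φ 2 μ) (hφν : MemLp φ 2 ν)
    (hφint : ∀ x, Integrable φ (p x))
    (Kx : E → H →L[ℝ] G)
    (hK : ∀ (x x' : E) (h h' : H),
      ⟪Kx x h, Kx x' h'⟫ = ⟪φ x, φ x'⟫ * ⟪h, h'⟫)
    (hGdense : Dense (Submodule.span ℝ {g : G | ∃ x h, g = Kx x h} : Set G))
    (T : G →L[ℝ] G)
    (hTint : ∀ F : G,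
      Integrable (fun x => Kx x (ContinuousLinearMap.adjoint (Kx x) F)) μ)
    (hT : ∀ F : G,
      T F = ∫ x, Kx x (ContinuousLinearMap.adjoint (Kx x) F) ∂μ)
    (C : H →L[ℝ] H)
    (hC : ∀ f h : H, ⟪h, C f⟫ = ∫ x, ⟪f, φ x⟫ * ⟪h, φ x⟫ ∂μ)
    (Cyx : H →L[ℝ] H)
    (hCyx : ∀ f h : H,
      ⟪h, Cyx f⟫ = ∫ x, ∫ y, ⟪f, φ x⟫ * ⟪h, φ y⟫ ∂(p x) ∂μ)
    (lam : ℝ) (hlam : 0 < lam)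
    (Binv : H →L[ℝ] H)
    (hBinv1 : (C + lam • ContinuousLinearMap.id ℝ H).comp Binv
      = ContinuousLinearMap.id ℝ H)
    (hBinv2 : Binv.comp (C + lam • ContinuousLinearMap.id ℝ H)
      = ContinuousLinearMap.id ℝ H)
    (Gstar : G)
    (hGstar : ∀ x : E, ContinuousLinearMap.adjoint (Kx x) Gstar
      = ∫ x', ⟪φ x, φ x'⟫ • (∫ y, φ y ∂(p x')) ∂μ)
    (Flam : G)
    (hFlam : T Flam + lam • Flam = Gstar) :
    ∀ x : E, ContinuousLinearMap.adjoint (Kx x) Flam = (Cyx.comp Binv) (φ x) :=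
  closed_form_tikhonov_solution_general μ ν p hmarg φ hφmeas hφμ hφν hφint Kx hK hGdense T hTint hT
    C hC Cyx hCyx lam hlam Binv hBinv2 Gstar hGstar Flam hFlam
end
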